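/- arXiv:2211.07167 — 2 statements merged into one kernel-verified Lean document; each statement's English description precedes it below -/
import Mathlib

section
/- Spectral decomposition theorem: if f: X → X is a bi-asymptotically c-expansive continuous surjection of a compact metric space with the shadowing property, then (1) Ω(f) = B₁ ∪ … ∪ B_k for finitely many pairwise disjoint closed f-invariant sets B_i with each f|_{B_i} topologically transitive, and (2) each B_i further decomposes as B_i = C₀ ∪ … ∪ C_{m-1} into pairwise disjoint closed sets with f(C_j) = C_{j+1 mod m}, f^m(C_j) = C_j, and f^m|_{C_j} topologically mixing for each j. -/
open Filter Topology Function

/-- A full orbit (element of the inverse limit) of `f`. -/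
def FullOrbit {X : Type*} (f : X → X) (x : ℤ → X) : Prop := ∀ n : ℤ, f (x n) = x (n + 1)

/-- `f` is bi-asymptotically `c`-expansive with constant `c`. -/
def BiAsympCExpWith {X : Type*} [MetricSpace X] (f : X → X) (c : ℝ) : Prop :=
  (∀ x y : ℤ → X, FullOrbit f x → FullOrbit f y →
      (∀ n : ℕ, dist (x n) (y n) ≤ c) →
      Tendsto (fun n : ℕ => dist (x n) (y n)) atTop (𝓝 0)) ∧
  (∀ x y : ℤ → X, FullOrbit f x → FullOrbit f y →
      (∀ n : ℕ, dist (x (-(n : ℤ))) (y (-(n : ℤ))) ≤ c) →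
      Tendsto (fun n : ℕ => dist (x (-(n : ℤ))) (y (-(n : ℤ)))) atTop (𝓝 0))

/-- `f` is bi-asymptotically `c`-expansive (for some constant). -/
def BiAsympCExpansive {X : Type*} [MetricSpace X] (f : X → X) : Prop :=
  ∃ c > 0, BiAsympCExpWith f c

/-- `f` has the shadowing property. -/
def Shadowing {X : Type*} [MetricSpace X] (f : X → X) : Prop :=
  ∀ ε > 0, ∃ δ > 0, ∀ x : ℕ → X, (∀ n : ℕ, dist (f (x n)) (x (n + 1)) ≤ δ) →
    ∃ y : X, ∀ n : ℕ, dist (f^[n] y) (x n) ≤ ε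

/-- `x` is a non-wandering point of `f`. -/
def NonWandering {X : Type*} [TopologicalSpace X] (f : X → X) (x : X) : Prop :=
  ∀ U : Set X, IsOpen U → x ∈ U → ∃ n : ℕ, 0 < n ∧ (f^[n] '' U ∩ U).Nonempty

/-- There is a finite `α`-chain from `x` to `y`. -/
def ChainRel {X : Type*} [MetricSpace X] (f : X → X) (α : ℝ) (x y : X) : Prop :=
  ∃ (n : ℕ) (z : ℕ → X), 0 < n ∧ z 0 = x ∧ z n = y ∧
    ∀ i < n, dist (f (z i)) (z (i + 1)) ≤ α

/-- `x` is a chain recurrent point of `f`. -/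
def ChainRecurrent {X : Type*} [MetricSpace X] (f : X → X) (x : X) : Prop :=
  ∀ α > 0, ChainRel f α x x

/-- chain equivalence of chain recurrent points -/
def ChainEquiv {X : Type*} [MetricSpace X] (f : X → X) (x y : X) : Prop :=
  ∀ α > 0, ChainRel f α x y ∧ ChainRel f α y x

/-- basic sets: chain equivalence classes of `CR(f)` -/
def IsBasicSet {X : Type*} [MetricSpace X] (f : X → X) (B : Set X) : Prop :=
  ∃ x : X, ChainRecurrent f x ∧ B = {y | ChainRecurrent f y ∧ ChainEquiv f x y}

/-- the stable set of `x`. -/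
def Ws {X : Type*} [MetricSpace X] (f : X → X) (x : X) : Set X :=
  {y | Tendsto (fun n : ℕ => dist (f^[n] x) (f^[n] y)) atTop (𝓝 0)}

/-- the unstable set of a full orbit `x`. -/
def Wu {X : Type*} [MetricSpace X] (f : X → X) (x : ℤ → X) : Set X :=
  {y₀ | ∃ y : ℤ → X, FullOrbit f y ∧ y 0 = y₀ ∧
    Tendsto (fun n : ℕ => dist (x (-(n : ℤ))) (y (-(n : ℤ)))) atTop (𝓝 0)}

/-- `g` restricted to `A` is topologically transitive. -/
def TopTransOn {X : Type*} [TopologicalSpace X] (g : X → X) (A : Set X) : Prop :=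
  ∀ U V : Set X, IsOpen U → IsOpen V → (U ∩ A).Nonempty → (V ∩ A).Nonempty →
    ∃ n : ℕ, 0 < n ∧ (g^[n] '' (U ∩ A) ∩ (V ∩ A)).Nonempty

/-- `g` restricted to `A` is topologically mixing. -/
def TopMixingOn {X : Type*} [TopologicalSpace X] (g : X → X) (A : Set X) : Prop :=
  ∀ U V : Set X, IsOpen U → IsOpen V → (U ∩ A).Nonempty → (V ∩ A).Nonempty →
    ∃ N : ℕ, ∀ n ≥ N, (g^[n] '' (U ∩ A) ∩ (V ∩ A)).Nonempty

/-- `g` is asymptotically expansive with constant `c`. -/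
def AsympExpWith {X : Type*} [MetricSpace X] (g : X → X) (c : ℝ) : Prop :=
  ∀ x y : X, (∀ n : ℕ, dist (g^[n] x) (g^[n] y) ≤ c) →
    Tendsto (fun n : ℕ => dist (g^[n] x) (g^[n] y)) atTop (𝓝 0)

set_option linter.unusedSectionVars false
set_option maxHeartbeats 1000000

namespace SD
variable {X : Type*} [MetricSpace X] {f : X → X}

/-- chain with `n` steps from `x` to `y` (n = 0 allowed). -/
def ChainLen (f : X → X) (α : ℝ) (n : ℕ) (x y : X) : Prop :=
  ∃ z : ℕ → X, z 0 = x ∧ z n = y ∧ ∀ i < n, dist (f (z i)) (z (i+1)) ≤ α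

theorem chainLen_refl (f : X → X) (α : ℝ) (x : X) : ChainLen f α 0 x x :=
  ⟨fun _ => x, rfl, rfl, by simp⟩

theorem chainLen_single {α : ℝ} {x y : X} (h : dist (f x) y ≤ α) : ChainLen f α 1 x y := by
  refine ⟨fun i => if i = 0 then x else y, by simp, by simp, ?_⟩
  intro i hi
  interval_cases i
  simpa using h

theorem chainLen_mono {α α' : ℝ} (h : α ≤ α') {n : ℕ} {x y : X} :
    ChainLen f α n x y → ChainLen f α' n x y := by
  rintro ⟨z, h0, hn, hj⟩
  exact ⟨z, h0, hn, fun i hi => (hj i hi).trans h⟩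

theorem chainLen_trans {α : ℝ} {n m : ℕ} {x y w : X}
    (h1 : ChainLen f α n x y) (h2 : ChainLen f α m y w) : ChainLen f α (n + m) x w := by
  obtain ⟨z1, h10, h1n, h1j⟩ := h1
  obtain ⟨z2, h20, h2n, h2j⟩ := h2
  refine ⟨fun i => if i ≤ n then z1 i else z2 (i - n), by simp [h10], ?_, ?_⟩
  · by_cases hm : m = 0
    · subst hm; simp [h1n, ← h20, h2n]
    · have : ¬ (n + m ≤ n) := by omega
      simp only [this, if_false]
      simpa using h2n
  · intro i hi
    by_cases hin : i + 1 ≤ n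
    · have : i ≤ n := by omega
      simp only [this, if_pos, hin]
      exact h1j i (by omega)
    · by_cases hieq : i ≤ n
      · have hie : i = n := by omega
        subst hie
        simp only [le_refl, if_pos, if_neg hin]
        have : i + 1 - i = 1 := by omega
        rw [this, h1n, ← h20]
        exact h2j 0 (by omega)
      · simp only [if_neg hieq, if_neg hin]
        have : i + 1 - n = (i - n) + 1 := by omega
        rw [this]
        exact h2j (i - n) (by omega)

theorem chainLen_replace_end {α η : ℝ} {n : ℕ} {x y y' : X}
    (h : ChainLen f α n x y) (hn : 0 < n) (hd : dist y y' ≤ η) :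
    ChainLen f (α + η) n x y' := by
  obtain ⟨z, h0, hzn, hj⟩ := h
  refine ⟨fun i => if i = n then y' else z i, by simp only [if_neg (by omega : ¬ (0 = n))]; exact h0, by simp, ?_⟩
  · intro i hi
    have hi' : i ≠ n := by omega
    simp only [if_neg hi']
    by_cases h1 : i + 1 = n
    · simp only [if_pos h1]
      have hy : z (i+1) = y := by rw [h1, hzn]
      calc dist (f (z i)) y' ≤ dist (f (z i)) y + dist y y' := dist_triangle _ _ _
        _ ≤ α + η := add_le_add (hy ▸ hj i hi) hd
    · simp only [if_neg h1]
      exact (hj i hi).trans (by linarith [dist_nonneg (x := y) (y := y')])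

theorem chainLen_replace_start {α η : ℝ} {n : ℕ} {x x' y : X}
    (h : ChainLen f α n x y) (hn : 0 < n) (hd : dist (f x') (f x) ≤ η) :
    ChainLen f (α + η) n x' y := by
  obtain ⟨z, h0, hzn, hj⟩ := h
  refine ⟨fun i => if i = 0 then x' else z i, by simp, by simp only [if_neg (by omega : ¬ (n = 0))]; exact hzn, ?_⟩
  intro i hi
  by_cases h1 : i = 0
  · subst h1
    simp only [if_pos rfl, if_neg (by omega : ¬ (0+1 = 0))]
    calc dist (f x') (z 1) ≤ dist (f x') (f x) + dist (f x) (z 1) := dist_triangle _ _ _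
      _ ≤ η + α := add_le_add hd (h0 ▸ hj 0 hi)
      _ = α + η := by ring
  · simp only [if_neg h1, if_neg (by omega : ¬ (i+1 = 0))]
    exact (hj i hi).trans (by linarith [dist_nonneg (x := f x') (y := f x)])

theorem chainLen_orbit {α : ℝ} (hα : 0 ≤ α) (x : X) (n : ℕ) :
    ChainLen f α n x (f^[n] x) := by
  refine ⟨fun i => f^[i] x, by simp, rfl, ?_⟩
  intro i _
  rw [← Function.iterate_succ_apply' f i x]
  simpa using hα

theorem fullOrbit_apply {z : ℤ → X} (hz : FullOrbit f z) (k : ℤ) (n : ℕ) :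
    z (k + n) = f^[n] (z k) := by
  induction n with
  | zero => simp
  | succ n ih =>
    have : (k + (↑n + 1)) = (k + n) + 1 := by ring
    rw [Nat.cast_add, Nat.cast_one, this, ← hz (k + n), ih, Function.iterate_succ_apply']

theorem chainLen_fullOrbit {α : ℝ} (hα : 0 ≤ α) {z : ℤ → X} (hz : FullOrbit f z)
    (k : ℤ) (n : ℕ) : ChainLen f α n (z k) (z (k + n)) := by
  rw [fullOrbit_apply hz k n]
  exact chainLen_orbit hα _ _

theorem fullOrbit_shift {z : ℤ → X} (hz : FullOrbit f z) (k : ℤ) :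
    FullOrbit f (fun n => z (n + k)) := by
  intro n
  have := hz (n + k)
  simpa [add_right_comm] using this

theorem chainRel_of_chainLen {α : ℝ} {n : ℕ} {x y : X} (hn : 0 < n)
    (h : ChainLen f α n x y) : ChainRel f α x y := by
  obtain ⟨z, h0, hzn, hj⟩ := h; exact ⟨n, z, hn, h0, hzn, hj⟩

theorem chainLen_of_chainRel {α : ℝ} {x y : X} (h : ChainRel f α x y) :
    ∃ n, 0 < n ∧ ChainLen f α n x y := by
  obtain ⟨n, z, hn, h0, hzn, hj⟩ := h; exact ⟨n, hn, z, h0, hzn, hj⟩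

variable [CompactSpace X]

theorem uc (hf : Continuous f) : ∀ ε > 0, ∃ δ > 0, δ ≤ ε ∧
    ∀ a b : X, dist a b ≤ δ → dist (f a) (f b) ≤ ε := by
  intro ε hε
  have h := CompactSpace.uniformContinuous_of_continuous hf
  rw [Metric.uniformContinuous_iff] at h
  obtain ⟨δ, hδ, hd⟩ := h ε hε
  refine ⟨min (δ/2) ε, by positivity, min_le_right _ _, ?_⟩
  intro a b hab
  exact (hd (lt_of_le_of_lt (hab.trans (min_le_left _ _)) (by linarith))).le

theorem chainLen_tail (hf : Continuous f) {α : ℝ} (hα : 0 < α) :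
    ∃ β > 0, β ≤ α ∧ ∀ n x y, 2 ≤ n → ChainLen f β n x y →
      ChainLen f α (n - 1) (f x) y := by
  obtain ⟨δ, hδ, hδε, hd⟩ := uc hf (α/2) (by linarith)
  refine ⟨min δ (α/2), by positivity, (min_le_right _ _).trans (by linarith), ?_⟩
  rintro n x y hn ⟨z, h0, hzn, hj⟩
  refine ⟨fun i => if i = 0 then f x else z (i+1), by simp, ?_, ?_⟩
  · simp only [if_neg (by omega : ¬ (n - 1 = 0))]
    rw [show n - 1 + 1 = n by omega, hzn]
  · intro i hi
    by_cases h1 : i = 0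
    · subst h1
      simp only [if_pos rfl, if_neg (by omega : ¬ (0+1=0))]
      have hz1 : dist (f x) (z 1) ≤ min δ (α/2) := by
        have := hj 0 (by omega); rw [h0] at this; exact this
      calc dist (f (f x)) (z (0+1+1)) ≤ dist (f (f x)) (f (z 1)) + dist (f (z 1)) (z 2) :=
            dist_triangle _ _ _
        _ ≤ α/2 + min δ (α/2) :=
            add_le_add (hd _ _ (hz1.trans (min_le_left _ _))) (hj 1 (by omega))
        _ ≤ α := by have := min_le_right δ (α/2); linarith
    · simp only [if_neg h1, if_neg (by omega : ¬ (i+1=0))]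
      exact (hj (i+1) (by omega)).trans ((min_le_right _ _).trans (by linarith))

theorem chainLen_dropN (hf : Continuous f) (N : ℕ) {α : ℝ} (hα : 0 < α) :
    ∃ β > 0, β ≤ α ∧ ∀ n x y, N + 1 ≤ n → ChainLen f β n x y →
      ChainLen f α (n - N) (f^[N] x) y := by
  induction N generalizing α with
  | zero =>
    exact ⟨α, hα, le_refl α, fun n x y _ h => by simpa using h⟩
  | succ N ih =>
    obtain ⟨β₁, hβ₁, hβ₁α, h1⟩ := ih hα
    obtain ⟨β₂, hβ₂, hβ₂β₁, h2⟩ := chainLen_tail hf hβ₁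
    refine ⟨β₂, hβ₂, hβ₂β₁.trans hβ₁α, ?_⟩
    intro n x y hn hc
    have hc1 := h2 n x y (by omega) hc
    have hc2 := h1 (n-1) (f x) y (by omega) hc1
    rw [show n - 1 - N = n - (N+1) by omega] at hc2
    rw [Function.iterate_succ_apply]
    exact hc2

theorem exists_fullOrbit_in {S : Set X} (hpre : ∀ x ∈ S, ∃ y ∈ S, f y = x)
    (hfwd : ∀ x ∈ S, f x ∈ S) {x₀ : X} (hx₀ : x₀ ∈ S) :
    ∃ z : ℤ → X, FullOrbit f z ∧ z 0 = x₀ ∧ ∀ n : ℤ, z n ∈ S := by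
  choose g hgS hgf using hpre
  let g' : {x // x ∈ S} → {x // x ∈ S} := fun p => ⟨g p.1 p.2, hgS p.1 p.2⟩
  let b : ℕ → {x // x ∈ S} := fun n => g'^[n] ⟨x₀, hx₀⟩
  have hb : ∀ n : ℕ, f (b (n+1)).1 = (b n).1 := by
    intro n
    have hb1 : b (n+1) = g' (b n) := Function.iterate_succ_apply' g' n _
    rw [hb1]
    exact hgf _ _
  have hfwd' : ∀ k : ℕ, f^[k] x₀ ∈ S := by
    intro k
    induction k with
    | zero => simpa using hx₀
    | succ k ih => rw [Function.iterate_succ_apply']; exact hfwd _ ih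
  refine ⟨fun n => if 0 ≤ n then f^[n.toNat] x₀ else (b (-n).toNat).1, ?_, by simp, ?_⟩
  · intro n
    rcases le_or_gt 0 n with h0 | h0
    · have h1 : (0:ℤ) ≤ n + 1 := by omega
      simp only [if_pos h0, if_pos h1]
      rw [show (n+1).toNat = n.toNat + 1 by omega, Function.iterate_succ_apply']
    · rcases eq_or_lt_of_le (by omega : n ≤ -1) with h1 | h1
      · rw [h1]
        norm_num
        exact hb 0
      · have h2 : ¬ (0:ℤ) ≤ n := by omega
        have h3 : ¬ (0:ℤ) ≤ n + 1 := by omega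
        simp only [if_neg h2, if_neg h3]
        have h4 : (-n).toNat = ((-(n+1)).toNat) + 1 := by omega
        rw [h4]
        exact hb _
  · intro n
    rcases le_or_gt 0 n with h0 | h0
    · simp only [if_pos h0]; exact hfwd' _
    · simp only [if_neg (not_le.mpr h0)]; exact (b _).2

theorem shadowing_two_sided (hf : Continuous f) (hsh : Shadowing f) :
    ∀ ε > 0, ∃ δ > 0, ∀ ξ : ℤ → X, (∀ n : ℤ, dist (f (ξ n)) (ξ (n+1)) ≤ δ) →
      ∃ z : ℤ → X, FullOrbit f z ∧ ∀ n : ℤ, dist (z n) (ξ n) ≤ ε := by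
  intro ε hε
  obtain ⟨δ, hδ, hsd⟩ := hsh ε hε
  refine ⟨δ, hδ, ?_⟩
  intro ξ hξ
  set A : ℕ → Set (ℤ → X) := fun K =>
    {z | ∀ n : ℤ, -(K:ℤ) ≤ n → (f (z n) = z (n+1) ∧ dist (z n) (ξ n) ≤ ε)} with hA
  have hclosed : ∀ K, IsClosed (A K) := by
    intro K
    have : A K = ⋂ (n : ℤ), {z : ℤ → X | -(K:ℤ) ≤ n → (f (z n) = z (n+1) ∧ dist (z n) (ξ n) ≤ ε)} := by
      ext z; simp [hA, Set.mem_iInter]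
    rw [this]
    refine isClosed_iInter (fun n => ?_)
    by_cases hn : -(K:ℤ) ≤ n
    · simp only [hn, forall_true_left]
      have : {z : ℤ → X | f (z n) = z (n+1) ∧ dist (z n) (ξ n) ≤ ε} =
          {z : ℤ → X | f (z n) = z (n+1)} ∩ {z : ℤ → X | dist (z n) (ξ n) ≤ ε} := rfl
      rw [this]
      exact (isClosed_eq (hf.comp (continuous_apply n)) (continuous_apply (n+1))).inter
        (isClosed_le ((continuous_apply n).dist continuous_const) continuous_const)
    · have : {z : ℤ → X | -(K:ℤ) ≤ n → (f (z n) = z (n+1) ∧ dist (z n) (ξ n) ≤ ε)} = Set.univ := by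
        ext z; simp [hn]
      rw [this]; exact isClosed_univ
  have hne : ∀ K, (A K).Nonempty := by
    intro K
    obtain ⟨y, hy⟩ := hsd (fun j : ℕ => ξ ((j:ℤ) - K)) (by
      intro j
      have := hξ ((j:ℤ) - K)
      have he : (j:ℤ) - K + 1 = ((j+1 : ℕ):ℤ) - K := by push_cast; ring
      rw [he] at this
      exact this)
    refine ⟨fun n => if h : -(K:ℤ) ≤ n then f^[(n + K).toNat] y else ξ n, ?_⟩
    intro n hn
    have hn1 : -(K:ℤ) ≤ n + 1 := by omega
    simp only [dif_pos hn, dif_pos hn1]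
    constructor
    · rw [show (n + 1 + K).toNat = (n+K).toNat + 1 by omega, Function.iterate_succ_apply']
    · have := hy ((n + K).toNat)
      have he : (((n+K).toNat : ℕ):ℤ) - K = n := by omega
      rw [he] at this
      exact this
  have hdec : ∀ K, A (K+1) ⊆ A K := by
    intro K z hz n hn
    exact hz n (by push_cast; omega)
  have hcpt : IsCompact (A 0) := (hclosed 0).isCompact
  have := IsCompact.nonempty_iInter_of_sequence_nonempty_isCompact_isClosed A hdec hne hcpt hclosed
  obtain ⟨z, hz⟩ := this
  rw [Set.mem_iInter] at hz
  refine ⟨z, ?_, ?_⟩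
  · intro n
    exact ((hz n.natAbs) n (by omega)).1
  · intro n
    exact ((hz n.natAbs) n (by omega)).2

theorem chainLen_image {α β : ℝ} {n : ℕ} {x y : X}
    (h : ChainLen f α n x y) (hd : ∀ a b : X, dist a b ≤ α → dist (f a) (f b) ≤ β) :
    ChainLen f β n (f x) (f y) := by
  obtain ⟨z, h0, hn, hj⟩ := h
  exact ⟨fun i => f (z i), by simp only []; rw [h0], by simp only []; rw [hn],
    fun i hi => hd _ _ (hj i hi)⟩

theorem cr_apply (hf : Continuous f) {x : X} (h : ChainRecurrent f x) :
    ChainRecurrent f (f x) := by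
  intro α hα
  obtain ⟨δ, hδ, _, hd⟩ := uc hf α hα
  obtain ⟨n, hn, hc⟩ := chainLen_of_chainRel (h δ hδ)
  exact chainRel_of_chainLen hn (chainLen_image hc hd)

theorem chainLen_repeat {α : ℝ} {n : ℕ} {x : X} (h : ChainLen f α n x x) :
    ∀ k : ℕ, ChainLen f α (k * n) x x := by
  intro k
  induction k with
  | zero => simpa using chainLen_refl f α x
  | succ k ih => rw [Nat.succ_mul]; exact chainLen_trans ih h

theorem cr_long_loops {w : X} (hcr : ChainRecurrent f w) {β : ℝ} (hβ : 0 < β) (N : ℕ) :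
    ∃ L, N ≤ L ∧ 0 < L ∧ ChainLen f β L w w := by
  obtain ⟨n, hn, hc⟩ := chainLen_of_chainRel (hcr β hβ)
  refine ⟨(N+1) * n, ?_, by positivity, chainLen_repeat hc (N+1)⟩
  calc N ≤ (N+1) * 1 := by omega
    _ ≤ (N+1) * n := Nat.mul_le_mul_left _ hn

/-- From a chain-recurrent point `w`, there are chains from `f^[N] w` back to `w` with
arbitrarily small jumps, whose length is `L - N` for an arbitrarily-small-jump loop of
length `L` at `w`. -/
theorem cr_iter_chain (hf : Continuous f) {w : X} (hcr : ChainRecurrent f w) (N : ℕ)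
    {α β : ℝ} (hα : 0 < α) (hβ : 0 < β) :
    ∃ L, N + 1 ≤ L ∧ ChainLen f β L w w ∧ ChainLen f α (L - N) (f^[N] w) w := by
  obtain ⟨γ, hγ, hγα, hdrop⟩ := chainLen_dropN hf N hα
  obtain ⟨L, hL, hL0, hc⟩ := cr_long_loops hcr (lt_min hγ hβ) (N+1)
  exact ⟨L, hL, chainLen_mono (min_le_right _ _) hc,
    hdrop L w w hL (chainLen_mono (min_le_left _ _) hc)⟩

theorem cr_closed (hf : Continuous f) : IsClosed {x : X | ChainRecurrent f x} := by
  rw [← closure_subset_iff_isClosed]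
  intro y hy α hα
  obtain ⟨δ, hδ, hδα, hd⟩ := uc hf (α/2) (by linarith)
  obtain ⟨x, hxs, hxy⟩ := Metric.mem_closure_iff.mp hy (min δ (α/4)) (by positivity)
  obtain ⟨n, hn, hc⟩ := chainLen_of_chainRel (hxs (α/4) (by linarith))
  have hyx1 : dist x y ≤ α/4 := by
    rw [dist_comm]; exact hxy.le.trans (min_le_right _ _)
  have hyx2 : dist y x ≤ δ := hxy.le.trans (min_le_left _ _)
  have h1 : ChainLen f (α/4 + α/4) n x y := chainLen_replace_end hc hn hyx1
  have h2 : ChainLen f (α/4 + α/4 + α/2) n y y :=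
    chainLen_replace_start h1 hn (hd _ _ hyx2)
  exact chainRel_of_chainLen hn (chainLen_mono (by linarith) h2)

theorem chainRel_trans {α : ℝ} {x y w : X} (h1 : ChainRel f α x y) (h2 : ChainRel f α y w) :
    ChainRel f α x w := by
  obtain ⟨n, hn, hc1⟩ := chainLen_of_chainRel h1
  obtain ⟨m, hm, hc2⟩ := chainLen_of_chainRel h2
  exact chainRel_of_chainLen (by omega) (chainLen_trans hc1 hc2)

theorem chainEquiv_refl {x : X} (h : ChainRecurrent f x) : ChainEquiv f x x :=
  fun α hα => ⟨h α hα, h α hα⟩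

theorem chainEquiv_symm {x y : X} (h : ChainEquiv f x y) : ChainEquiv f y x :=
  fun α hα => ⟨(h α hα).2, (h α hα).1⟩

theorem chainEquiv_trans {x y w : X} (h1 : ChainEquiv f x y) (h2 : ChainEquiv f y w) :
    ChainEquiv f x w := fun α hα =>
  ⟨chainRel_trans (h1 α hα).1 (h2 α hα).1, chainRel_trans (h2 α hα).2 (h1 α hα).2⟩

theorem cr_preimage (hf : Continuous f) {x : X} (hcr : ChainRecurrent f x) :
    ∃ w, ChainRecurrent f w ∧ f w = x ∧ ChainEquiv f x w := by
  -- approximate preimages along small loops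
  have key : ∀ k : ℕ, ∃ w : X, dist (f w) x ≤ 1/(k+1) ∧
      ∃ m, ChainLen f (1/(k+1)) m x w := by
    intro k
    have hk : (0:ℝ) < 1/(k+1) := by positivity
    obtain ⟨n, z, hn, h0, hzn, hj⟩ := hcr (1/(k+1)) hk
    refine ⟨z (n-1), ?_, n-1, z, h0, rfl, fun i hi => hj i (by omega)⟩
    have := hj (n-1) (by omega)
    rw [show n - 1 + 1 = n by omega, hzn] at this
    exact this
  choose ws hws hchain using key
  obtain ⟨w, -, φ, hφ, hconv⟩ := isCompact_univ.tendsto_subseq (fun k => Set.mem_univ (ws k))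
  have hfw : f w = x := by
    have h1 : Tendsto (fun j => dist (f (ws (φ j))) x) atTop (𝓝 (dist (f w) x)) :=
      ((hf.tendsto w).comp hconv).dist tendsto_const_nhds
    have h2 : Tendsto (fun j => dist (f (ws (φ j))) x) atTop (𝓝 0) := by
      refine squeeze_zero (fun j => dist_nonneg) (fun j => hws (φ j)) ?_
      have : Tendsto (fun j : ℕ => 1/((φ j : ℝ)+1)) atTop (𝓝 0) :=
        (tendsto_one_div_add_atTop_nhds_zero_nat).comp (hφ.tendsto_atTop)
      exact this
    have := tendsto_nhds_unique h1 h2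
    exact dist_eq_zero.mp this
  -- chains from x to w with arbitrarily small jumps
  have hxw : ∀ α > 0, ∃ m, 0 < m ∧ ChainLen f α m x w := by
    intro α hα
    obtain ⟨j, hj1, hj2⟩ : ∃ j : ℕ, 1/((φ j : ℝ)+1) ≤ α/2 ∧ dist (ws (φ j)) w ≤ α/2 := by
      have h2 : Tendsto (fun j : ℕ => 1/((φ j : ℝ)+1)) atTop (𝓝 0) :=
        tendsto_one_div_add_atTop_nhds_zero_nat.comp (hφ.tendsto_atTop)
      have h3 : Tendsto (fun j => dist (ws (φ j)) w) atTop (𝓝 0) :=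
        tendsto_iff_dist_tendsto_zero.mp hconv
      have h4 := (h2.eventually (eventually_le_nhds (by linarith : (0:ℝ) < α/2))).and
        (h3.eventually (eventually_le_nhds (by linarith : (0:ℝ) < α/2)))
      exact h4.exists
    obtain ⟨m, hm⟩ := hchain (φ j)
    obtain ⟨n₀, hn₀, hloop⟩ := chainLen_of_chainRel (hcr (α/2) (by linarith))
    have hc1 : ChainLen f (α/2) m x (ws (φ j)) := chainLen_mono (by linarith) hm
    have hc2 : ChainLen f (α/2) (n₀ + m) x (ws (φ j)) := chainLen_trans hloop hc1
    have hc3 : ChainLen f (α/2 + α/2) (n₀ + m) x w := chainLen_replace_end hc2 (by omega) hj2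
    exact ⟨n₀ + m, by omega, chainLen_mono (by linarith) hc3⟩
  have hwx : ∀ α > 0, ChainRel f α w x := by
    intro α hα
    exact chainRel_of_chainLen Nat.one_pos (chainLen_single (by rw [hfw]; simpa using hα.le))
  refine ⟨w, ?_, hfw, ?_⟩
  · intro α hα
    obtain ⟨m, hm, hc⟩ := hxw (α/2) (by linarith)
    have h1 : ChainLen f (α/2) 1 w x := by
      apply chainLen_single
      rw [hfw]; simp; linarith
    exact chainRel_of_chainLen (by omega) (chainLen_mono (by linarith) (chainLen_trans h1 hc))
  · intro α hα
    obtain ⟨m, hm, hc⟩ := hxw α hα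
    exact ⟨chainRel_of_chainLen hm hc, hwx α hα⟩

theorem nonWandering_chainRecurrent (hf : Continuous f) {x : X} (h : NonWandering f x) :
    ChainRecurrent f x := by
  intro α hα
  obtain ⟨δ, hδ, hδα, hd⟩ := uc hf (α/2) (by linarith)
  set r := min δ (α/2) with hr
  have hr0 : 0 < r := by positivity
  obtain ⟨n, hn, p, hp1, hp2⟩ := h (Metric.ball x r) Metric.isOpen_ball (Metric.mem_ball_self hr0)
  obtain ⟨u, hu, hfu⟩ := hp1
  have hud : dist x u ≤ δ := by
    rw [dist_comm]
    exact (Metric.mem_ball.mp hu).le.trans (min_le_left _ _)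
  have hfnu : dist (f^[n] u) x ≤ α/2 := (Metric.mem_ball.mp (hfu ▸ hp2)).le.trans (min_le_right _ _)
  set w : ℕ → X := fun j => if j = 0 ∨ j = n then x else f^[j] u with hw
  refine ⟨n, w, hn, by simp [hw], by simp [hw], ?_⟩
  intro i hi
  have e1 : dist (f (w i)) (f^[i+1] u) ≤ α/2 := by
    by_cases h0 : i = 0
    · subst h0
      simp only [hw, true_or, if_pos]
      have hfu1 : f^[0+1] u = f u := by simp
      rw [hfu1]
      exact hd _ _ hud
    · have : w i = f^[i] u := by simp only [hw, if_neg (show ¬(i = 0 ∨ i = n) by omega)]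
      rw [this, ← Function.iterate_succ_apply' f i u]
      simp
      linarith
  have e2 : dist (f^[i+1] u) (w (i+1)) ≤ α/2 := by
    by_cases h1 : i + 1 = n
    · have : w (i+1) = x := by simp only [hw, h1, or_true, if_pos]
      rw [this, h1]
      exact hfnu
    · have : w (i+1) = f^[i+1] u := by
        simp only [hw, if_neg (show ¬(i+1 = 0 ∨ i+1 = n) by omega)]
      rw [this]
      simp
      linarith
  calc dist (f (w i)) (w (i+1)) ≤ dist (f (w i)) (f^[i+1] u) + dist (f^[i+1] u) (w (i+1)) :=
        dist_triangle _ _ _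
    _ ≤ α/2 + α/2 := add_le_add e1 e2
    _ = α := by ring

theorem chainRecurrent_nonWandering (hsh : Shadowing f) {x : X} (h : ChainRecurrent f x) :
    NonWandering f x := by
  intro U hU hx
  obtain ⟨ε, hε, hball⟩ := Metric.isOpen_iff.mp hU x hx
  obtain ⟨δ, hδ, hsd⟩ := hsh (ε/2) (by linarith)
  obtain ⟨n, z, hn, h0, hzn, hj⟩ := h δ hδ
  have hper : ∀ i : ℕ, dist (f (z (i % n))) (z ((i+1) % n)) ≤ δ := by
    intro i
    have hlt : i % n < n := Nat.mod_lt _ hn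
    have hdm := Nat.div_add_mod i n
    have hmc : i / n * n = n * (i / n) := Nat.mul_comm _ _
    by_cases hc : i % n + 1 = n
    · have he : i + 1 = (i / n + 1) * n := by
        rw [Nat.add_mul, Nat.one_mul]; omega
      have h1 : (i+1) % n = 0 := by rw [he]; simp
      have h2 := hj (i % n) hlt
      rw [hc, hzn, ← h0] at h2
      rw [h1]
      exact h2
    · have h1 : (i+1) % n = i % n + 1 := by
        rw [show i + 1 = i % n + 1 + (i / n) * n by omega,
          Nat.add_mul_mod_self_right, Nat.mod_eq_of_lt (by omega)]
      rw [h1]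
      exact hj _ hlt
  obtain ⟨y, hy⟩ := hsd (fun i => z (i % n)) hper
  have hy0 : dist y x ≤ ε/2 := by
    have := hy 0
    simpa [Nat.zero_mod, h0] using this
  have hyn : dist (f^[n] y) x ≤ ε/2 := by
    have := hy n
    simpa [Nat.mod_self, h0] using this
  refine ⟨n, hn, f^[n] y, ⟨y, ?_, rfl⟩, ?_⟩
  · exact hball (Metric.mem_ball.mpr (by linarith [hy0]))
  · exact hball (Metric.mem_ball.mpr (by linarith [hyn]))

/-- every chain recurrent point lies on a full orbit of chain recurrent points. -/
theorem cr_fullOrbit (hf : Continuous f) {x : X} (hx : ChainRecurrent f x) :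
    ∃ z : ℤ → X, FullOrbit f z ∧ z 0 = x ∧ ∀ n : ℤ, ChainRecurrent f (z n) := by
  obtain ⟨z, h1, h2, h3⟩ := exists_fullOrbit_in (S := {x : X | ChainRecurrent f x})
    (fun a ha => by
      obtain ⟨w, hw1, hw2, -⟩ := cr_preimage hf ha
      exact ⟨w, hw1, hw2⟩)
    (fun a ha => cr_apply hf ha) hx
  exact ⟨z, h1, h2, h3⟩

/-- The key local lemma: chain recurrent points at distance `≤ δ₀` are joined by
chains with arbitrarily small jumps. -/
theorem local_chainRel (hf : Continuous f) (hsh : Shadowing f) {c : ℝ} (hc : 0 < c)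
    (hexp : BiAsympCExpWith f c) :
    ∃ δ₀ > 0, ∀ x y : X, ChainRecurrent f x → ChainRecurrent f y → dist x y ≤ δ₀ →
      ∀ α > 0, ChainRel f α x y := by
  obtain ⟨δ, hδ, hshad⟩ := shadowing_two_sided hf hsh (c/2) (by linarith)
  refine ⟨min δ (c/2), by positivity, ?_⟩
  intro x y hcrx hcry hxy α hα
  obtain ⟨xt, hxt, hxt0, hxtcr⟩ := cr_fullOrbit hf hcrx
  obtain ⟨yt, hyt, hyt0, -⟩ := cr_fullOrbit hf hcry
  set ζ : ℤ → X := fun n => if n < 0 then xt n else yt n with hζ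
  have hpseudo : ∀ n : ℤ, dist (f (ζ n)) (ζ (n+1)) ≤ δ := by
    intro n
    rcases lt_trichotomy n (-1) with h | h | h
    · have h1 : n < 0 := by omega
      have h2 : n + 1 < 0 := by omega
      simp only [hζ, if_pos h1, if_pos h2, hxt n]
      simp
      linarith
    · subst h
      have h1 : (-1 : ℤ) < 0 := by omega
      have h2 : ¬ ((-1:ℤ) + 1 < 0) := by omega
      simp only [hζ, if_pos h1, if_neg h2]
      have : f (xt (-1)) = xt 0 := by
        have := hxt (-1); simpa using this
      rw [this, hxt0, show (-1:ℤ)+1 = 0 from by ring, hyt0]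
      exact hxy.trans (min_le_left _ _)
    · have h1 : ¬ (n < 0) := by omega
      have h2 : ¬ (n + 1 < 0) := by omega
      simp only [hζ, if_pos, if_neg h1, if_neg h2, hyt n]
      simp
      linarith
  obtain ⟨z, hz, hztr⟩ := hshad ζ hpseudo
  -- forward asymptotics: z approaches the orbit of y
  have hfwd : Tendsto (fun n : ℕ => dist (z n) (yt n)) atTop (𝓝 0) := by
    refine hexp.1 z yt hz hyt (fun n => ?_)
    have h1 : ¬ ((n:ℤ) < 0) := by omega
    have := hztr n
    rw [hζ] at this
    simp only [if_neg h1] at this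
    linarith
  -- backward asymptotics: z approaches the orbit of x
  have hbwd : Tendsto (fun n : ℕ => dist (z (-(n:ℤ))) (xt (-(n:ℤ)))) atTop (𝓝 0) := by
    refine hexp.2 z xt hz hxt (fun n => ?_)
    rcases Nat.eq_zero_or_pos n with h | h
    · subst h
      simp only [Nat.cast_zero, neg_zero, hxt0]
      have h1 := hztr 0
      rw [hζ] at h1
      simp only [if_neg (by omega : ¬ ((0:ℤ) < 0))] at h1
      rw [hyt0] at h1
      calc dist (z 0) x ≤ dist (z 0) y + dist y x := dist_triangle _ _ _
        _ ≤ c/2 + c/2 := add_le_add h1 ((dist_comm x y ▸ hxy).trans (min_le_right _ _))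
        _ = c := by ring
    · have h1 : (-(n:ℤ)) < 0 := by omega
      have := hztr (-(n:ℤ))
      rw [hζ] at this
      simp only [if_pos h1] at this
      linarith
  -- choose N and M
  obtain ⟨N, hN1, hN2⟩ := ((hbwd.eventually (eventually_le_nhds (by linarith : (0:ℝ) < α/2))).and
    (eventually_ge_atTop 1)).exists
  obtain ⟨M, hM1, hM2⟩ := ((hfwd.eventually (eventually_le_nhds (by linarith : (0:ℝ) < α/2))).and
    (eventually_ge_atTop 1)).exists
  -- piece 1 : chain from x to xt (-N)
  have hx0 : f^[N] (xt (-(N:ℤ))) = x := by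
    have := fullOrbit_apply hxt (-(N:ℤ)) N
    rw [show (-(N:ℤ) + (N:ℕ)) = 0 from by push_cast; ring, hxt0] at this
    exact this.symm
  obtain ⟨L, hL, -, hc1⟩ := cr_iter_chain hf (hxtcr (-(N:ℤ))) N
    (by linarith : (0:ℝ) < α/2) (by linarith : (0:ℝ) < α/2)
  rw [hx0] at hc1
  have hc1' : ChainLen f (α/2 + α/2) (L - N) x (z (-(N:ℤ))) :=
    chainLen_replace_end hc1 (by omega) (by rw [dist_comm]; exact hN1)
  -- piece 2 : true orbit of z from -N to M, endpoint replaced by f^[M] y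
  have hzNM : ChainLen f (α/2) (N + M) (z (-(N:ℤ))) (z (M:ℤ)) := by
    have := chainLen_fullOrbit (f := f) (by linarith : (0:ℝ) ≤ α/2) hz (-(N:ℤ)) (N + M)
    rw [show (-(N:ℤ) + ((N+M : ℕ):ℤ)) = (M:ℤ) from by push_cast; ring] at this
    exact this
  have hyM : f^[M] y = yt (M:ℤ) := by
    have := fullOrbit_apply hyt 0 M
    rw [zero_add, hyt0] at this
    exact this.symm
  have hc2 : ChainLen f (α/2 + α/2) (N + M) (z (-(N:ℤ))) (f^[M] y) := by
    refine chainLen_replace_end hzNM (by omega) ?_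
    rw [hyM]
    exact hM1
  -- piece 3 : chain from f^[M] y to y
  obtain ⟨L', hL', -, hc3⟩ := cr_iter_chain hf hcry M
    (by linarith : (0:ℝ) < α) (by linarith : (0:ℝ) < α/2)
  -- assemble
  have hA : ChainLen f α (L - N) x (z (-(N:ℤ))) := chainLen_mono (by linarith) hc1'
  have hB : ChainLen f α (N + M) (z (-(N:ℤ))) (f^[M] y) := chainLen_mono (by linarith) hc2
  exact chainRel_of_chainLen (by omega) (chainLen_trans (chainLen_trans hA hB) hc3)

theorem local_chainEquiv (hf : Continuous f) (hsh : Shadowing f) {c : ℝ} (hc : 0 < c)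
    (hexp : BiAsympCExpWith f c) :
    ∃ δ₀ > 0, ∀ x y : X, ChainRecurrent f x → ChainRecurrent f y → dist x y ≤ δ₀ →
      ChainEquiv f x y := by
  obtain ⟨δ₀, hδ₀, h⟩ := local_chainRel hf hsh hc hexp
  refine ⟨δ₀, hδ₀, fun x y hx hy hxy α hα => ⟨h x y hx hy hxy α hα, ?_⟩⟩
  exact h y x hy hx (dist_comm x y ▸ hxy) α hα

/-- the chain equivalence class ("basic set") of `x`. -/
def basicClass (f : X → X) (x : X) : Set X :=
  {y | ChainRecurrent f y ∧ ChainEquiv f x y}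

theorem basicClass_eq_of_inter {x x' : X} (hx : ChainRecurrent f x) (hx' : ChainRecurrent f x')
    (hne : (basicClass f x ∩ basicClass f x').Nonempty) : basicClass f x = basicClass f x' := by
  obtain ⟨w, ⟨hw1, hw2⟩, ⟨hw3, hw4⟩⟩ := hne
  have hxx' : ChainEquiv f x' x := chainEquiv_trans hw4 (chainEquiv_symm hw2)
  ext y
  constructor
  · rintro ⟨h1, h2⟩
    exact ⟨h1, chainEquiv_trans hxx' h2⟩
  · rintro ⟨h1, h2⟩
    exact ⟨h1, chainEquiv_trans (chainEquiv_symm hxx') h2⟩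

theorem mem_basicClass_self {x : X} (hx : ChainRecurrent f x) : x ∈ basicClass f x :=
  ⟨hx, chainEquiv_refl hx⟩

theorem basicClass_subset_cr {x : X} : basicClass f x ⊆ {y : X | ChainRecurrent f y} :=
  fun _ h => h.1

theorem basicClass_closed (hf : Continuous f) (hsh : Shadowing f) {c : ℝ} (hc : 0 < c)
    (hexp : BiAsympCExpWith f c) (x : X) : IsClosed (basicClass f x) := by
  obtain ⟨δ₀, hδ₀, hloc⟩ := local_chainEquiv hf hsh hc hexp
  rw [← closure_subset_iff_isClosed]
  intro y hy
  have hycr : ChainRecurrent f y := by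
    have h1 : closure (basicClass f x) ⊆ {y : X | ChainRecurrent f y} :=
      closure_minimal basicClass_subset_cr (cr_closed hf)
    exact h1 hy
  obtain ⟨y', hy', hd⟩ := Metric.mem_closure_iff.mp hy δ₀ hδ₀
  exact ⟨hycr, chainEquiv_trans hy'.2 (hloc y' y hy'.1 hycr (dist_comm y y' ▸ hd.le))⟩

theorem chainEquiv_apply_self (hf : Continuous f) {a : X} (ha : ChainRecurrent f a) :
    ChainEquiv f a (f a) := by
  intro α hα
  constructor
  · exact chainRel_of_chainLen Nat.one_pos (chainLen_single (by simp; linarith))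
  · obtain ⟨L, hL, -, hcm⟩ := cr_iter_chain hf ha 1 hα hα
    have : f^[1] a = f a := by simp
    rw [this] at hcm
    exact chainRel_of_chainLen (by omega) hcm

theorem basicClass_image (hf : Continuous f) {x : X} (hx : ChainRecurrent f x) :
    f '' basicClass f x = basicClass f x := by
  apply Set.Subset.antisymm
  · rintro - ⟨a, ⟨ha1, ha2⟩, rfl⟩
    exact ⟨cr_apply hf ha1, chainEquiv_trans ha2 (chainEquiv_apply_self hf ha1)⟩
  · rintro w ⟨hw1, hw2⟩
    obtain ⟨u, hu1, hu2, hu3⟩ := cr_preimage hf hw1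
    exact ⟨u, ⟨hu1, chainEquiv_trans hw2 hu3⟩, hu2⟩

theorem classes_decomp (hf : Continuous f) (hsh : Shadowing f) {c : ℝ} (hc : 0 < c)
    (hexp : BiAsympCExpWith f c) :
    ∃ (k : ℕ), 0 < k ∧ ∃ B : Fin k → Set X,
      (∀ i, B i = ∅ ∨ ∃ x, ChainRecurrent f x ∧ x ∈ B i ∧ B i = basicClass f x) ∧
      (∀ i j, i ≠ j → Disjoint (B i) (B j)) ∧
      {x : X | ChainRecurrent f x} = ⋃ i, B i := by
  classical
  obtain ⟨δ₀, hδ₀, hloc⟩ := local_chainEquiv hf hsh hc hexp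
  set S : Set X := {x : X | ChainRecurrent f x} with hS
  by_cases hSe : S = ∅
  · refine ⟨1, Nat.one_pos, fun _ => ∅, fun i => Or.inl rfl, ?_, ?_⟩
    · intro i j hij
      exact absurd (Subsingleton.elim i j) hij
    · simp [hSe]
  · -- finite subcover by δ₀-balls with chain recurrent centres
    have hScpt : IsCompact S := ((cr_closed hf).isCompact)
    have hcov : S ⊆ ⋃ p ∈ S, Metric.ball p δ₀ := by
      intro a ha
      exact Set.mem_biUnion ha (Metric.mem_ball_self hδ₀)
    obtain ⟨t, htS, htfin, htcov⟩ := hScpt.elim_finite_subcover_image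
      (fun p _ => Metric.isOpen_ball) hcov
    -- the finite set of classes
    set T : Finset (Set X) := htfin.toFinset.image (fun p => basicClass f p) with hT
    have hmemT : ∀ A ∈ T, ∃ p, ChainRecurrent f p ∧ A = basicClass f p := by
      intro A hA
      rw [hT] at hA
      obtain ⟨p, hp, hpA⟩ := Finset.mem_image.mp hA
      exact ⟨p, htS (htfin.mem_toFinset.mp hp), hpA.symm⟩
    have hTne : T.Nonempty := by
      obtain ⟨a, ha⟩ := Set.nonempty_iff_ne_empty.mpr hSe
      obtain ⟨p, hp, -⟩ := Set.mem_iUnion₂.mp (htcov ha)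
      refine ⟨basicClass f p, ?_⟩
      rw [hT]
      exact Finset.mem_image_of_mem _ (htfin.mem_toFinset.mpr hp)
    refine ⟨T.card, Finset.card_pos.mpr hTne, fun i => ((T.equivFin.symm i : {A // A ∈ T}) : Set X),
      ?_, ?_, ?_⟩
    · intro i
      obtain ⟨p, hp, hpA⟩ := hmemT _ (T.equivFin.symm i).2
      refine Or.inr ⟨p, hp, ?_, hpA⟩
      show p ∈ ((T.equivFin.symm i : {A // A ∈ T}) : Set X)
      rw [hpA]
      exact mem_basicClass_self hp
    · intro i j hij
      obtain ⟨p, hp, hpA⟩ := hmemT _ (T.equivFin.symm i).2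
      obtain ⟨q, hq, hqA⟩ := hmemT _ (T.equivFin.symm j).2
      rw [Set.disjoint_iff_inter_eq_empty]
      by_contra hne
      have hinter : (basicClass f p ∩ basicClass f q).Nonempty := by
        rw [← hpA, ← hqA]
        exact Set.nonempty_iff_ne_empty.mpr hne
      have heq : ((T.equivFin.symm i : {A // A ∈ T}) : Set X)
          = ((T.equivFin.symm j : {A // A ∈ T}) : Set X) := by
        rw [hpA, hqA]
        exact basicClass_eq_of_inter hp hq hinter
      have : T.equivFin.symm i = T.equivFin.symm j := Subtype.ext heq
      exact hij (T.equivFin.symm.injective this)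
    · apply Set.Subset.antisymm
      · intro y hy
        obtain ⟨p, hp, hyp⟩ := Set.mem_iUnion₂.mp (htcov hy)
        have hpcr : ChainRecurrent f p := htS hp
        have hyB : y ∈ basicClass f p :=
          ⟨hy, hloc p y hpcr hy (by rw [dist_comm]; exact (Metric.mem_ball.mp hyp).le)⟩
        have hmem : basicClass f p ∈ T := by
          rw [hT]
          exact Finset.mem_image_of_mem _ (htfin.mem_toFinset.mpr hp)
        refine Set.mem_iUnion.mpr ⟨T.equivFin ⟨basicClass f p, hmem⟩, ?_⟩
        simp only [Equiv.symm_apply_apply]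
        exact hyB
      · refine Set.iUnion_subset (fun i => ?_)
        obtain ⟨p, hp, hpA⟩ := hmemT _ (T.equivFin.symm i).2
        rw [hpA]
        exact basicClass_subset_cr

theorem fullOrbit_iter_zero {ut : ℤ → X} (hut : FullOrbit f ut) (N : ℕ) :
    f^[N] (ut (-(N:ℤ))) = ut 0 := by
  have := fullOrbit_apply hut (-(N:ℤ)) N
  rw [show (-(N:ℤ) + (N:ℕ)) = 0 from by ring] at this
  exact this.symm

/-- chains from `ut 0` backwards to `z 0` along a shadowing orbit `z`
asymptotic to the past of `ut`. -/
theorem chain_orbit_to_zero (hf : Continuous f) {z ut : ℤ → X} (hz : FullOrbit f z)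
    (hut : FullOrbit f ut) (hutcr : ∀ n : ℤ, ChainRecurrent f (ut n))
    (hb : Tendsto (fun n : ℕ => dist (z (-(n:ℤ))) (ut (-(n:ℤ)))) atTop (𝓝 0))
    {α γ : ℝ} (hα : 0 < α) (hγ : 0 < γ) :
    ∃ (N L : ℕ), N + 1 ≤ L ∧ ChainLen f γ L (ut (-(N:ℤ))) (ut (-(N:ℤ))) ∧
      ChainLen f α L (ut 0) (z 0) := by
  obtain ⟨N, hN⟩ := (hb.eventually (eventually_le_nhds (by linarith : (0:ℝ) < α/2))).exists
  obtain ⟨L, hL, hloop, hc1⟩ := cr_iter_chain hf (hutcr (-(N:ℤ))) N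
    (by linarith : (0:ℝ) < α/2) hγ
  rw [fullOrbit_iter_zero hut N] at hc1
  have hc2 : ChainLen f (α/2 + α/2) (L - N) (ut 0) (z (-(N:ℤ))) :=
    chainLen_replace_end hc1 (by omega) (by rw [dist_comm]; exact hN)
  have hc3 : ChainLen f α (N : ℕ) (z (-(N:ℤ))) (z 0) := by
    have := chainLen_fullOrbit (f := f) hα.le hz (-(N:ℤ)) N
    rw [show (-(N:ℤ) + (N:ℕ)) = 0 from by ring] at this
    exact this
  have := chainLen_trans (chainLen_mono (by linarith) hc2) hc3
  rw [show L - N + N = L by omega] at this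
  exact ⟨N, L, hL, hloop, this⟩

/-- chains from `z 0` to `v` along a shadowing orbit forward-asymptotic to the orbit of `v`. -/
theorem chain_zero_to_target (hf : Continuous f) {z : ℤ → X} (hz : FullOrbit f z) {v : X}
    (hv : ChainRecurrent f v) (K : ℕ) (hK : 0 < K)
    (hfw : Tendsto (fun n : ℕ => dist (z ((K:ℤ) + n)) (f^[n] v)) atTop (𝓝 0))
    {α γ : ℝ} (hα : 0 < α) (hγ : 0 < γ) :
    ∃ (M L : ℕ), M + 1 ≤ L ∧ ChainLen f γ L v v ∧ ChainLen f α (K + L) (z 0) v := by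
  obtain ⟨M, hM⟩ := (hfw.eventually (eventually_le_nhds (by linarith : (0:ℝ) < α/2))).exists
  have hc1 : ChainLen f (α/2) (K + M) (z 0) (z ((K:ℤ) + M)) := by
    have := chainLen_fullOrbit (f := f) (by linarith : (0:ℝ) ≤ α/2) hz 0 (K + M)
    rw [show ((0:ℤ) + ((K+M : ℕ):ℤ)) = (K:ℤ) + M from by push_cast; ring] at this
    exact this
  have hc2 : ChainLen f (α/2 + α/2) (K + M) (z 0) (f^[M] v) :=
    chainLen_replace_end hc1 (by omega : 0 < K + M) hM
  obtain ⟨L, hL, hloop, hc3⟩ := cr_iter_chain hf hv M hα hγ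
  have := chainLen_trans (chainLen_mono (by linarith) hc2) hc3
  rw [show K + M + (L - M) = K + L by omega] at this
  exact ⟨M, L, hL, hloop, this⟩

theorem orbit_point_equiv (hf : Continuous f) {ut : ℤ → X} (hut : FullOrbit f ut)
    (hutcr : ∀ n : ℤ, ChainRecurrent f (ut n)) (N : ℕ) :
    ChainEquiv f (ut 0) (ut (-(N:ℤ))) := by
  rcases Nat.eq_zero_or_pos N with h | h
  · subst h
    simpa using chainEquiv_refl (hutcr 0)
  · intro α hα
    constructor
    · obtain ⟨L, hL, -, hc⟩ := cr_iter_chain hf (hutcr (-(N:ℤ))) N hα hα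
      rw [fullOrbit_iter_zero hut N] at hc
      exact chainRel_of_chainLen (by omega) hc
    · have hc : ChainLen f α N (ut (-(N:ℤ))) (ut 0) := by
        have := chainLen_fullOrbit (f := f) hα.le hut (-(N:ℤ)) N
        rw [show (-(N:ℤ) + (N:ℕ)) = 0 from by ring] at this
        exact this
      exact chainRel_of_chainLen h hc

/-- the central connecting construction. -/
theorem connect_full (hf : Continuous f) (hsh : Shadowing f) {c : ℝ} (hc : 0 < c)
    (hexp : BiAsympCExpWith f c) :
    ∀ ε > 0, ∃ δ > 0, ∀ u v : X, ChainRecurrent f u → ChainRecurrent f v →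
      ∀ K, 0 < K → ChainLen f δ K u v →
      ∃ (z ut : ℤ → X), FullOrbit f z ∧ FullOrbit f ut ∧ ut 0 = u ∧
        (∀ n : ℤ, ChainRecurrent f (ut n)) ∧
        dist (z 0) u ≤ ε ∧ dist (z (K:ℤ)) v ≤ ε ∧
        Tendsto (fun n : ℕ => dist (z (-(n:ℤ))) (ut (-(n:ℤ)))) atTop (𝓝 0) ∧
        Tendsto (fun n : ℕ => dist (z ((K:ℤ) + n)) (f^[n] v)) atTop (𝓝 0) := by
  intro ε hε
  set ε' := min ε (c/2) with hε'
  have hε'0 : 0 < ε' := by positivity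
  obtain ⟨δ, hδ, hshad⟩ := shadowing_two_sided hf hsh ε' hε'0
  refine ⟨δ, hδ, ?_⟩
  intro u v hu hv K hK hchain
  obtain ⟨ut, hut, hut0, hutcr⟩ := cr_fullOrbit hf hu
  obtain ⟨vt, hvt, hvt0, -⟩ := cr_fullOrbit hf hv
  obtain ⟨w, hw0, hwK, hwj⟩ := hchain
  set ζ : ℤ → X := fun n => if n < 0 then ut n else if n ≤ (K:ℤ) then w n.toNat
    else f^[(n - K).toNat] v with hζ
  have hζ0 : ζ 0 = u := by simp [hζ, hw0]
  have hζK : ζ (K:ℤ) = v := by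
    simp only [hζ, if_neg (by omega : ¬ ((K:ℤ) < 0)), if_pos (le_refl (K:ℤ))]
    rw [Int.toNat_natCast]
    exact hwK
  have hζneg : ∀ n : ℤ, n < 0 → ζ n = ut n := fun n hn => by simp [hζ, hn]
  have hζfwd : ∀ n : ℕ, ζ ((K:ℤ) + n) = f^[n] v := by
    intro n
    rcases Nat.eq_zero_or_pos n with h | h
    · subst h; simpa using hζK
    · have h1 : ¬ ((K:ℤ) + n < 0) := by omega
      have h2 : ¬ ((K:ℤ) + n ≤ (K:ℤ)) := by omega
      simp only [hζ, if_neg h1, if_neg h2]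
      congr 1
      omega
  have hpseudo : ∀ n : ℤ, dist (f (ζ n)) (ζ (n+1)) ≤ δ := by
    intro n
    rcases lt_trichotomy n (-1) with h | h | h
    · rw [hζneg n (by omega), hζneg (n+1) (by omega), hut n]
      simp; linarith
    · subst h
      rw [hζneg (-1) (by omega), hut (-1), show (-1:ℤ)+1 = 0 from by ring, hζ0, hut0]
      simp; linarith
    · -- n ≥ 0
      have hn0 : (0:ℤ) ≤ n := by omega
      rcases lt_or_ge n (K:ℤ) with hnK | hnK
      · have e1 : ζ n = w n.toNat := by
          simp only [hζ, if_neg (by omega : ¬ (n < 0)), if_pos (by omega : n ≤ (K:ℤ))]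
        have e2 : ζ (n+1) = w (n.toNat + 1) := by
          simp only [hζ, if_neg (by omega : ¬ (n+1 < 0)), if_pos (by omega : n+1 ≤ (K:ℤ))]
          congr 1
          omega
        rw [e1, e2]
        exact hwj n.toNat (by omega)
      · set j := (n - K).toNat with hj
        have hn : n = (K:ℤ) + j := by omega
        rw [hn, hζfwd j,
          show (K:ℤ) + j + 1 = (K:ℤ) + ((j+1 : ℕ) : ℤ) from by push_cast; ring,
          hζfwd (j+1), ← Function.iterate_succ_apply' f j v]
        simp; linarith
  obtain ⟨z, hz, hztr⟩ := hshad ζ hpseudo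
  have hbwd : Tendsto (fun n : ℕ => dist (z (-(n:ℤ))) (ut (-(n:ℤ)))) atTop (𝓝 0) := by
    refine hexp.2 z ut hz hut (fun n => ?_)
    rcases Nat.eq_zero_or_pos n with h | h
    · subst h
      simp only [Nat.cast_zero, neg_zero, hut0]
      have := hztr 0
      rw [hζ0] at this
      exact this.trans ((min_le_right _ _).trans (by linarith))
    · have := hztr (-(n:ℤ))
      rw [hζneg _ (by omega)] at this
      exact this.trans ((min_le_right _ _).trans (by linarith))
  have hfwd : Tendsto (fun n : ℕ => dist (z ((K:ℤ) + n)) (f^[n] v)) atTop (𝓝 0) := by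
    have hshift : FullOrbit f (fun n : ℤ => z (n + K)) := fullOrbit_shift hz K
    have he3 : ∀ n : ℕ, vt (n:ℤ) = f^[n] v := by
      intro n
      have := fullOrbit_apply hvt 0 n
      rw [zero_add, hvt0] at this
      exact this
    have h1 := hexp.1 (fun n : ℤ => z (n + K)) vt hshift hvt (fun n => by
      have hb2 := hztr ((n:ℤ) + K)
      rw [show ((n:ℤ) + K) = (K:ℤ) + n from by ring, hζfwd n] at hb2
      show dist (z ((n:ℤ) + K)) (vt (n:ℤ)) ≤ c
      rw [show ((n:ℤ) + K) = (K:ℤ) + n from by ring, he3 n]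
      exact hb2.trans ((min_le_right _ _).trans (by linarith)))
    refine h1.congr (fun n => ?_)
    show dist (z ((n:ℤ) + K)) (vt (n:ℤ)) = _
    rw [show ((n:ℤ) + K) = (K:ℤ) + n from by ring, he3 n]
  refine ⟨z, ut, hz, hut, hut0, hutcr, ?_, ?_, hbwd, hfwd⟩
  · have := hztr 0
    rw [hζ0] at this
    exact this.trans (min_le_left _ _)
  · have := hztr (K:ℤ)
    rw [hζK] at this
    exact this.trans (min_le_left _ _)

/-- the tracing point lies in the same basic class. -/
theorem zero_mem_class (hf : Continuous f) {z ut : ℤ → X} (hz : FullOrbit f z)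
    (hut : FullOrbit f ut) (hutcr : ∀ n : ℤ, ChainRecurrent f (ut n)) {u v : X}
    (hut0 : ut 0 = u) (hv : ChainRecurrent f v) (hvu : ∀ α > 0, ChainRel f α v u)
    (K : ℕ) (hK : 0 < K)
    (hb : Tendsto (fun n : ℕ => dist (z (-(n:ℤ))) (ut (-(n:ℤ)))) atTop (𝓝 0))
    (hfw : Tendsto (fun n : ℕ => dist (z ((K:ℤ) + n)) (f^[n] v)) atTop (𝓝 0)) :
    ChainRecurrent f (z 0) ∧ ChainEquiv f u (z 0) := by
  have huz : ∀ α > 0, ChainRel f α u (z 0) := by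
    intro α hα
    obtain ⟨N, L, hNL, -, hc⟩ := chain_orbit_to_zero hf hz hut hutcr hb hα hα
    rw [hut0] at hc
    exact chainRel_of_chainLen (by omega) hc
  have hzv : ∀ α > 0, ChainRel f α (z 0) v := by
    intro α hα
    obtain ⟨M, L, hML, -, hc⟩ := chain_zero_to_target hf hz hv K hK hfw hα hα
    exact chainRel_of_chainLen (by omega) hc
  have hzu : ∀ α > 0, ChainRel f α (z 0) u := fun α hα =>
    chainRel_trans (hzv α hα) (hvu α hα)
  refine ⟨fun α hα => chainRel_trans (hzu α hα) (huz α hα), fun α hα => ⟨huz α hα, hzu α hα⟩⟩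

/-- topological transitivity of `f` on each basic class. -/
theorem class_topTrans (hf : Continuous f) (hsh : Shadowing f) {c : ℝ} (hc : 0 < c)
    (hexp : BiAsympCExpWith f c) {x₀ : X} (hx₀ : ChainRecurrent f x₀) :
    TopTransOn f (basicClass f x₀) := by
  intro U V hU hV hUne hVne
  obtain ⟨u, huU, hucr, hux⟩ := hUne
  obtain ⟨v, hvV, hvcr, hvx⟩ := hVne
  obtain ⟨ε₁, hε₁, hballU⟩ := Metric.isOpen_iff.mp hU u huU
  obtain ⟨ε₂, hε₂, hballV⟩ := Metric.isOpen_iff.mp hV v hvV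
  set ε := min ε₁ ε₂ / 2 with hε
  have hε0 : 0 < ε := by positivity
  obtain ⟨δ, hδ, hconn⟩ := connect_full hf hsh hc hexp ε hε0
  have hequiv : ChainEquiv f u v := chainEquiv_trans (chainEquiv_symm hux) hvx
  obtain ⟨K, hK, hchain⟩ := chainLen_of_chainRel ((hequiv δ hδ).1)
  obtain ⟨z, ut, hz, hut, hut0, hutcr, hz0, hzK, hb, hfw⟩ :=
    hconn u v hucr hvcr K hK hchain
  obtain ⟨hzcr, hzequiv⟩ := zero_mem_class hf hz hut hutcr hut0 hvcr
    (fun α hα => (hequiv α hα).2) K hK hb hfw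
  refine ⟨K, hK, f^[K] (z 0), ⟨z 0, ⟨?_, ?_⟩, rfl⟩, ?_, ?_⟩
  · apply hballU
    rw [Metric.mem_ball]
    calc dist (z 0) u ≤ ε := hz0
      _ < ε₁ := by
        have := min_le_left ε₁ ε₂
        rw [hε]; linarith
  · exact ⟨hzcr, chainEquiv_trans hux hzequiv⟩
  · apply hballV
    rw [Metric.mem_ball]
    have e1 : f^[K] (z 0) = z (K:ℤ) := by
      have := fullOrbit_apply hz 0 K
      rw [zero_add] at this
      exact this.symm
    rw [e1]
    calc dist (z (K:ℤ)) v ≤ ε := hzK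
      _ < ε₂ := by
        have := min_le_right ε₁ ε₂
        rw [hε]; linarith
  · have e1 : f^[K] (z 0) = z (K:ℤ) := by
      have := fullOrbit_apply hz 0 K
      rw [zero_add] at this
      exact this.symm
    have hmem : ChainRecurrent f (z 0) ∧ ChainEquiv f x₀ (z 0) :=
      ⟨hzcr, chainEquiv_trans hux hzequiv⟩
    have : f^[K] (z 0) ∈ basicClass f x₀ := by
      have himg : ∀ j : ℕ, f^[j] (z 0) ∈ basicClass f x₀ := by
        intro j
        induction j with
        | zero => simpa using (show z 0 ∈ basicClass f x₀ from hmem)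
        | succ j ih =>
          rw [Function.iterate_succ_apply']
          rw [← basicClass_image hf hx₀]
          exact ⟨_, ih, rfl⟩
      exact himg K
    exact this

section NumberTheory

theorem s0_add {S : Set ℕ} (hadd : ∀ a ∈ S, ∀ b ∈ S, a + b ∈ S) {a b : ℕ}
    (ha : a = 0 ∨ a ∈ S) (hb : b = 0 ∨ b ∈ S) : a + b = 0 ∨ a + b ∈ S := by
  rcases ha with h | h
  · rcases hb with h2 | h2
    · left; omega
    · right; rw [h, zero_add]; exact h2
  · rcases hb with h2 | h2
    · right; rw [h2, add_zero]; exact h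
    · right; exact hadd _ h _ h2

theorem s0_nsmul {S : Set ℕ} (hadd : ∀ a ∈ S, ∀ b ∈ S, a + b ∈ S) {a : ℕ}
    (ha : a = 0 ∨ a ∈ S) (k : ℕ) : k * a = 0 ∨ k * a ∈ S := by
  induction k with
  | zero => left; simp
  | succ k ih =>
    rw [Nat.succ_mul]
    exact s0_add hadd ih ha

theorem exists_gcd_structure {S : Set ℕ} (hadd : ∀ a ∈ S, ∀ b ∈ S, a + b ∈ S)
    {q : ℕ} (hq : q ∈ S) (hq0 : 0 < q) :
    ∃ m, 0 < m ∧ (∀ a ∈ S, m ∣ a) ∧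
      ∃ P Q, (P = 0 ∨ P ∈ S) ∧ (Q = 0 ∨ Q ∈ S) ∧ P = Q + m := by
  set H : AddSubgroup ℤ := AddSubgroup.closure ((fun n : ℕ => (n:ℤ)) '' S) with hH
  obtain ⟨g, hg⟩ := Int.subgroup_cyclic H
  have hmemH : ∀ a ∈ S, (a:ℤ) ∈ H := fun a ha =>
    AddSubgroup.subset_closure ⟨a, ha, rfl⟩
  have hdvd : ∀ a ∈ S, g ∣ (a:ℤ) := by
    intro a ha
    have := hmemH a ha
    rw [hg, AddSubgroup.mem_closure_singleton] at this
    obtain ⟨k, hk⟩ := this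
    exact ⟨k, by rw [← hk, smul_eq_mul]; ring⟩
  have hg0 : g ≠ 0 := by
    intro h
    have := hdvd q hq
    rw [h] at this
    have : (q:ℤ) = 0 := zero_dvd_iff.mp this
    omega
  set m := g.natAbs with hm
  have hm0 : 0 < m := Int.natAbs_pos.mpr hg0
  have hmdvd : ∀ a ∈ S, m ∣ a := by
    intro a ha
    have h1 : (↑m:ℤ) ∣ (a:ℤ) := (Int.natAbs_dvd).mpr (hdvd a ha)
    exact_mod_cast h1
  -- m (as an integer, ± g) lies in H
  have hmH : (m:ℤ) ∈ H := by
    have hgH : g ∈ H := by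
      rw [hg]
      exact AddSubgroup.subset_closure rfl
    rcases Int.natAbs_eq g with h | h
    · rw [hm, ← h] at *
      exact hgH
    · have : (m:ℤ) = -g := by omega
      rw [this]
      exact neg_mem hgH
  -- closure induction to write m = P - Q
  have hrep : ∃ P Q : ℕ, (P = 0 ∨ P ∈ S) ∧ (Q = 0 ∨ Q ∈ S) ∧ (m:ℤ) = (P:ℤ) - Q := by
    rw [hH] at hmH
    refine AddSubgroup.closure_induction (p := fun x _ => ∃ P Q : ℕ,
        (P = 0 ∨ P ∈ S) ∧ (Q = 0 ∨ Q ∈ S) ∧ x = (P:ℤ) - (Q:ℤ)) ?_ ?_ ?_ ?_ hmH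
    · rintro x ⟨a, ha, rfl⟩
      exact ⟨a, 0, Or.inr ha, Or.inl rfl, by simp⟩
    · exact ⟨0, 0, Or.inl rfl, Or.inl rfl, by simp⟩
    · rintro x y hx hy ⟨P, Q, hP, hQ, hPQ⟩ ⟨P', Q', hP', hQ', hPQ'⟩
      exact ⟨P + P', Q + Q', s0_add hadd hP hP', s0_add hadd hQ hQ', by push_cast; omega⟩
    · rintro x hx ⟨P, Q, hP, hQ, hPQ⟩
      exact ⟨Q, P, hQ, hP, by omega⟩
  obtain ⟨P, Q, hP, hQ, hPQ⟩ := hrep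
  exact ⟨m, hm0, hmdvd, P, Q, hP, hQ, by omega⟩

theorem frobenius_structure {S : Set ℕ} (hadd : ∀ a ∈ S, ∀ b ∈ S, a + b ∈ S)
    {m P Q : ℕ} (hm : 0 < m) (hP : P = 0 ∨ P ∈ S) (hQ : Q = 0 ∨ Q ∈ S)
    (hPQ : P = Q + m) (hQd : m ∣ Q) :
    ∃ N₀, 1 ≤ N₀ ∧ ∀ t, N₀ ≤ t → (m * t = 0 ∨ m * t ∈ S) := by
  obtain ⟨s, hs⟩ := hQd
  refine ⟨(s+1)^3, Nat.one_le_iff_ne_zero.mpr (by positivity), ?_⟩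
  intro t ht
  set d := t / (s+1) with hd
  set r := t % (s+1) with hr
  have hdm : (s+1) * d + r = t := Nat.div_add_mod t (s+1)
  have hrlt : r < s + 1 := Nat.mod_lt t (by omega)
  have hdge : (s+1)^2 ≤ d := by
    rw [hd, Nat.le_div_iff_mul_le (by omega : 0 < s + 1)]
    calc (s+1)^2 * (s+1) = (s+1)^3 := by ring
      _ ≤ t := ht
  set L := d + r with hL
  have hsq : (s+1)^2 = s*s + 2*s + 1 := by ring
  have hrs : r * s ≤ s * s := Nat.mul_le_mul_right s (by omega)
  have hds : (s+1) * d = d * s + d := by ring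
  have hLs' : L * s = d * s + r * s := by rw [hL]; ring
  have hdge' : s * s + 2 * s + 1 ≤ d := by
    calc s * s + 2 * s + 1 = (s+1)^2 := by ring
      _ ≤ d := hdge
  have hLs : L * s ≤ t := by
    rw [hLs']
    omega
  set i := t - L * s with hi
  have hiL : i ≤ L := by
    have h1 : t ≤ L * s + L := by
      have e : L * s + L = d * s + r * s + d + r := by rw [hLs', hL]; ring
      omega
    omega
  -- membership
  have hPm : i * P = 0 ∨ i * P ∈ S := s0_nsmul hadd hP i
  have hQm : (L - i) * Q = 0 ∨ (L - i) * Q ∈ S := s0_nsmul hadd hQ (L - i)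
  have hsum := s0_add hadd hPm hQm
  -- arithmetic identity
  have e1 : i * s + (L - i) * s = L * s := by
    rw [← Nat.add_mul, Nat.add_sub_cancel' hiL]
  have e2 : L * s + i = t := by omega
  have e3 : i * s + i + (L - i) * s = t := by
    rw [Nat.add_right_comm, e1, e2]
  have e4 : i * P + (L - i) * Q = m * t := by
    rw [hPQ, hs]
    calc i * (m * s + m) + (L - i) * (m * s) = m * (i * s + i + (L - i) * s) := by ring
      _ = m * t := by rw [e3]
  rw [e4] at hsum
  exact hsum

end NumberTheory

theorem periodic_cr {p : X} {q : ℕ} (hq : 0 < q) (hper : f^[q] p = p) :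
    ChainRecurrent f p := by
  intro α hα
  refine ⟨q, fun i => f^[i] p, hq, by simp, by simp [hper], ?_⟩
  intro i _
  rw [← Function.iterate_succ_apply' f i p]
  simp
  linarith

theorem exists_periodic_near (hf : Continuous f) (hsh : Shadowing f) {c : ℝ} (hc : 0 < c)
    (hexp : BiAsympCExpWith f c) {x : X} (hx : ChainRecurrent f x) :
    ∀ ε > 0, ∃ p q, 0 < q ∧ f^[q] p = p ∧ dist p x ≤ ε := by
  intro ε hε
  set ε' := min ε (c/2) with hε'
  have hε'0 : 0 < ε' := by positivity
  obtain ⟨δ, hδ, hshad⟩ := shadowing_two_sided hf hsh ε' hε'0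
  obtain ⟨q, w, hq, hw0, hwq, hwj⟩ := hx δ hδ
  have hqZ : (0:ℤ) < (q:ℤ) := by exact_mod_cast hq
  set ξ : ℤ → X := fun n => w (n % (q:ℤ)).toNat with hξ
  have hmodlt : ∀ n : ℤ, 0 ≤ n % (q:ℤ) ∧ n % (q:ℤ) < q :=
    fun n => ⟨Int.emod_nonneg n (by omega), Int.emod_lt_of_pos n hqZ⟩
  have hsucc : ∀ n : ℤ, (n + 1) % (q:ℤ) = (n % q + 1) % q := by
    intro n
    conv_lhs => rw [← Int.emod_add_mul_ediv n (q:ℤ)]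
    rw [show n % (q:ℤ) + (q:ℤ) * (n / q) + 1 = (n % (q:ℤ) + 1) + (q:ℤ) * (n / q) from by ring,
      Int.add_mul_emod_self_left]
  have hpseudo : ∀ n : ℤ, dist (f (ξ n)) (ξ (n+1)) ≤ δ := by
    intro n
    obtain ⟨h0, h1⟩ := hmodlt n
    by_cases hcase : n % (q:ℤ) + 1 = (q:ℤ)
    · have hq0 : (n+1) % (q:ℤ) = 0 := by
        rw [hsucc n, hcase, Int.emod_self]
      have hjump := hwj (n % (q:ℤ)).toNat (by omega)
      rw [show (n % (q:ℤ)).toNat + 1 = q from by omega, hwq, ← hw0] at hjump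
      simp only [hξ, hq0]
      simpa using hjump
    · have hq1 : (n+1) % (q:ℤ) = n % (q:ℤ) + 1 := by
        rw [hsucc n, Int.emod_eq_of_lt (by omega) (by omega)]
      simp only [hξ, hq1]
      rw [show (n % (q:ℤ) + 1).toNat = (n % (q:ℤ)).toNat + 1 from by omega]
      exact hwj (n % (q:ℤ)).toNat (by omega)
  obtain ⟨z, hz, hztr⟩ := hshad ξ hpseudo
  have hximul : ∀ k : ℤ, ξ (k * q) = x := by
    intro k
    simp only [hξ, Int.mul_emod_left]
    simpa using hw0
  have hxiq : ∀ n : ℤ, ξ (n + q) = ξ n := by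
    intro n
    simp only [hξ]
    congr 2
    conv_lhs => rw [show n + (q:ℤ) = n + (q:ℤ) * 1 from by ring, Int.add_mul_emod_self_left]
  have hfordist : ∀ n : ℕ, dist (z n) (z ((n:ℤ) + q)) ≤ c := by
    intro n
    calc dist (z n) (z ((n:ℤ) + q)) ≤ dist (z n) (ξ n) + dist (ξ n) (z ((n:ℤ)+q)) :=
          dist_triangle _ _ _
      _ ≤ ε' + ε' := by
          refine add_le_add (hztr n) ?_
          rw [← hxiq n, dist_comm]
          exact hztr _
      _ ≤ c := by
          have := min_le_right ε (c/2)
          rw [hε'] at *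
          linarith [min_le_right ε (c/2)]
  have hfwd : Tendsto (fun n : ℕ => dist (z n) (z ((n:ℤ) + q))) atTop (𝓝 0) := by
    have h1 := hexp.1 z (fun n => z (n + q)) hz (fullOrbit_shift hz q) (fun n => hfordist n)
    exact h1
  set a : ℕ → X := fun k => z ((k:ℤ) * q) with ha
  obtain ⟨p, -, φ, hφ, hconv⟩ := isCompact_univ.tendsto_subseq (fun k => Set.mem_univ (a k))
  have hstep : ∀ k : ℕ, f^[q] (a k) = a (k+1) := by
    intro k
    have := fullOrbit_apply hz ((k:ℤ) * q) q
    rw [show ((k:ℤ)*q + (q:ℕ)) = (((k+1 : ℕ)):ℤ) * q from by push_cast; ring] at this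
    exact this.symm
  have hdiff : Tendsto (fun j : ℕ => dist (a (φ j)) (a (φ j + 1))) atTop (𝓝 0) := by
    have hφq : Tendsto (fun j : ℕ => φ j * q) atTop atTop :=
      Tendsto.atTop_mul_const' hq hφ.tendsto_atTop
    have h2 := hfwd.comp hφq
    refine h2.congr (fun j => ?_)
    simp only [Function.comp_apply, ha]
    congr 2 <;> push_cast <;> ring
  have hconv1 : Tendsto (fun j : ℕ => a (φ j + 1)) atTop (𝓝 p) := by
    rw [tendsto_iff_dist_tendsto_zero]
    refine squeeze_zero (fun j => dist_nonneg) (fun j =>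
      dist_triangle (a (φ j + 1)) (a (φ j)) p) ?_
    have h3 : Tendsto (fun j : ℕ => dist (a (φ j + 1)) (a (φ j))) atTop (𝓝 0) := by
      refine hdiff.congr (fun j => dist_comm _ _)
    have h4 : Tendsto (fun j : ℕ => dist (a (φ j)) p) atTop (𝓝 0) :=
      tendsto_iff_dist_tendsto_zero.mp hconv
    simpa using h3.add h4
  have hfix : f^[q] p = p := by
    have h5 : Tendsto (fun j : ℕ => f^[q] (a (φ j))) atTop (𝓝 (f^[q] p)) :=
      ((hf.iterate q).tendsto p).comp hconv
    have h6 : Tendsto (fun j : ℕ => f^[q] (a (φ j))) atTop (𝓝 p) := by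
      refine hconv1.congr (fun j => ?_)
      rw [hstep]
    exact tendsto_nhds_unique h5 h6
  refine ⟨p, q, hq, hfix, ?_⟩
  have hax : ∀ k : ℕ, dist (a k) x ≤ ε' := by
    intro k
    have := hztr ((k:ℤ) * q)
    rw [hximul k] at this
    exact this
  have h7 : Tendsto (fun j : ℕ => dist (a (φ j)) x) atTop (𝓝 (dist p x)) :=
    hconv.dist tendsto_const_nhds
  have h8 : dist p x ≤ ε' := le_of_tendsto h7 (Eventually.of_forall (fun j => hax (φ j)))
  exact h8.trans (min_le_left _ _)

theorem loop_gcd (hf : Continuous f) {p : X} {q : ℕ} (hq : 0 < q) (hper : f^[q] p = p) :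
    ∃ m, 0 < m ∧ m ∣ q ∧ ∃ α₀ > 0, ∀ α, 0 < α → α ≤ α₀ →
      (∀ a, 0 < a → ChainLen f α a p p → m ∣ a) ∧
      (∃ N₀, 1 ≤ N₀ ∧ ∀ t, N₀ ≤ t → ChainLen f α (m * t) p p) := by
  classical
  set Sset : ℝ → Set ℕ := fun α => {a : ℕ | 0 < a ∧ ChainLen f α a p p} with hSset
  have hmono : ∀ α α' : ℝ, α ≤ α' → Sset α ⊆ Sset α' :=
    fun α α' h a ha => ⟨ha.1, chainLen_mono h ha.2⟩
  have hadd : ∀ α : ℝ, ∀ a ∈ Sset α, ∀ b ∈ Sset α, a + b ∈ Sset α :=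
    fun α a ha b hb => ⟨Nat.add_pos_left ha.1 b, chainLen_trans ha.2 hb.2⟩
  have hqmem : ∀ α : ℝ, 0 < α → q ∈ Sset α := by
    intro α hα
    refine ⟨hq, ?_⟩
    have := chainLen_orbit (f := f) hα.le p q
    rwa [hper] at this
  have hgcd : ∀ α : ℝ, 0 < α → ∃ m, 0 < m ∧ (∀ a ∈ Sset α, m ∣ a) ∧
      ∃ P Q, (P = 0 ∨ P ∈ Sset α) ∧ (Q = 0 ∨ Q ∈ Sset α) ∧ P = Q + m :=
    fun α hα => exists_gcd_structure (hadd α) (hqmem α hα) hq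
  set Pred : ℕ → Prop := fun m => 0 < m ∧ ∃ α : ℝ, 0 < α ∧ (∀ a ∈ Sset α, m ∣ a) ∧
      ∃ P Q, (P = 0 ∨ P ∈ Sset α) ∧ (Q = 0 ∨ Q ∈ Sset α) ∧ P = Q + m with hPred
  obtain ⟨m₁, hm₁, hdvd₁, P₁, Q₁, hP₁, hQ₁, hPQ₁⟩ := hgcd 1 one_pos
  have hm₁q : m₁ ∣ q := hdvd₁ q (hqmem 1 one_pos)
  have hPm₁ : Pred m₁ := ⟨hm₁, 1, one_pos, hdvd₁, P₁, Q₁, hP₁, hQ₁, hPQ₁⟩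
  set m := Nat.findGreatest Pred q with hm
  have hPm : Pred m := Nat.findGreatest_spec (Nat.le_of_dvd hq hm₁q) hPm₁
  obtain ⟨hm0, α₀, hα₀, hdvd₀, Pm, Qm, hPmS, hQmS, hPQm⟩ := hPm
  have hmq : m ∣ q := hdvd₀ q (hqmem α₀ hα₀)
  refine ⟨m, hm0, hmq, α₀, hα₀, ?_⟩
  intro α hα hαα₀
  -- m is also the gcd of `Sset α`
  obtain ⟨mα, hmα0, hdvdα, Pα, Qα, hPαS, hQαS, hPQα⟩ := hgcd α hα
  have hmαq : mα ∣ q := hdvdα q (hqmem α hα)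
  have hmαle : mα ≤ m := by
    rw [hm]
    exact Nat.le_findGreatest (Nat.le_of_dvd hq hmαq)
      ⟨hmα0, α, hα, hdvdα, Pα, Qα, hPαS, hQαS, hPQα⟩
  have hs0 : ∀ a : ℕ, (a = 0 ∨ a ∈ Sset α) → m ∣ a := by
    rintro a (rfl | ha)
    · exact dvd_zero m
    · exact hdvd₀ a (hmono α α₀ hαα₀ ha)
  have hmmα : m ∣ mα := by
    have h1 : m ∣ Pα := hs0 _ hPαS
    have h2 : m ∣ Qα := hs0 _ hQαS
    have : m ∣ Qα + mα := hPQα ▸ h1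
    exact (Nat.dvd_add_right h2).mp this
  have hmeq : mα = m := le_antisymm hmαle (Nat.le_of_dvd hmα0 hmmα)
  constructor
  · intro a ha hca
    have : mα ∣ a := hdvdα a ⟨ha, hca⟩
    rwa [hmeq] at this
  · have hQαd : m ∣ Qα := by
      rcases hQαS with h | h
      · rw [h]; exact dvd_zero m
      · rw [← hmeq]; exact hdvdα _ h
    have hPQα' : Pα = Qα + m := by rw [← hmeq]; exact hPQα
    obtain ⟨N₀, hN₀1, hN₀⟩ := frobenius_structure (hadd α) hm0 hPαS hQαS hPQα' hQαd
    refine ⟨N₀, hN₀1, ?_⟩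
    intro t ht
    rcases hN₀ t ht with h | h
    · exfalso
      have : 0 < m * t := Nat.mul_pos hm0 (by omega)
      omega
    · exact h.2

theorem mod_succ_inj {m j j' : ℕ} (h : j < m) (h' : j' < m)
    (he : (j+1) % m = (j'+1) % m) : j = j' := by
  by_cases h1 : j + 1 = m <;> by_cases h2 : j' + 1 = m
  · omega
  · rw [h1, Nat.mod_self, Nat.mod_eq_of_lt (by omega : j' + 1 < m)] at he
    omega
  · rw [h2, Nat.mod_self, Nat.mod_eq_of_lt (by omega : j + 1 < m)] at he
    omega
  · rw [Nat.mod_eq_of_lt (by omega : j + 1 < m), Nat.mod_eq_of_lt (by omega : j' + 1 < m)] at he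
    omega

theorem class_decomp_mixing (hf : Continuous f) (hsh : Shadowing f) {c : ℝ} (hc : 0 < c)
    (hexp : BiAsympCExpWith f c) {x₀ : X} (hx₀ : ChainRecurrent f x₀) :
    ∃ m : ℕ, 0 < m ∧ ∃ C : ℕ → Set X,
      (∀ j < m, IsClosed (C j)) ∧
      (∀ j j', j < m → j' < m → j ≠ j' → Disjoint (C j) (C j')) ∧
      basicClass f x₀ = ⋃ j ∈ Finset.range m, C j ∧
      (∀ j < m, f '' C j = C ((j + 1) % m)) ∧
      (∀ j < m, f^[m] '' C j = C j) ∧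
      (∀ j < m, TopMixingOn (f^[m]) (C j)) := by
  obtain ⟨δ₀, hδ₀, hloc⟩ := local_chainEquiv hf hsh hc hexp
  obtain ⟨p, q, hq, hper, hpx⟩ := exists_periodic_near hf hsh hc hexp hx₀ δ₀ hδ₀
  have hpcr : ChainRecurrent f p := periodic_cr hq hper
  have hpeq : ChainEquiv f x₀ p := hloc x₀ p hx₀ hpcr (by rw [dist_comm]; exact hpx)
  have hpB : p ∈ basicClass f x₀ := ⟨hpcr, hpeq⟩
  obtain ⟨m, hm0, hmq, α₀, hα₀, hαprop⟩ := loop_gcd hf hq hper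
  have hBchain : ∀ y ∈ basicClass f x₀, ChainEquiv f p y := by
    intro y hy
    exact chainEquiv_trans (chainEquiv_symm hpeq) hy.2
  have hdvd := (hαprop α₀ hα₀ le_rfl).1
  have hloopdvd : ∀ w ∈ basicClass f x₀, ∀ L, 0 < L → ChainLen f α₀ L w w → m ∣ L := by
    intro w hw L hL hcl
    obtain ⟨e, he, hce⟩ := chainLen_of_chainRel ((hBchain w hw α₀ hα₀).1)
    obtain ⟨e', he', hce'⟩ := chainLen_of_chainRel ((hBchain w hw α₀ hα₀).2)
    have h1 : m ∣ e + e' := hdvd _ (by omega) (chainLen_trans hce hce')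
    have h2 : m ∣ e + (L + e') := hdvd _ (by omega)
      (chainLen_trans hce (chainLen_trans hcl hce'))
    have h3 : e + (L + e') - (e + e') = L := by omega
    have h4 := Nat.dvd_sub h2 h1
    rwa [h3] at h4
  have hres : ∀ y ∈ basicClass f x₀, ∀ a a', 0 < a → 0 < a' →
      ChainLen f α₀ a p y → ChainLen f α₀ a' p y → a % m = a' % m := by
    intro y hy a a' ha ha' hca hca'
    obtain ⟨b, hb, hcb⟩ := chainLen_of_chainRel ((hBchain y hy α₀ hα₀).2)
    have h1 : m ∣ a + b := hloopdvd p hpB _ (by omega) (chainLen_trans hca hcb)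
    have h2 : m ∣ a' + b := hloopdvd p hpB _ (by omega) (chainLen_trans hca' hcb)
    have h1' : a + b ≡ 0 [MOD m] := (Nat.modEq_zero_iff_dvd).mpr h1
    have h2' : a' + b ≡ 0 [MOD m] := (Nat.modEq_zero_iff_dvd).mpr h2
    exact Nat.ModEq.add_right_cancel' b (h1'.trans h2'.symm)
  set C : ℕ → Set X := fun j => {y | y ∈ basicClass f x₀ ∧ ∀ α : ℝ, 0 < α →
      ∃ a, 0 < a ∧ a % m = j ∧ ChainLen f α a p y} with hC
  have hCsub : ∀ j, C j ⊆ basicClass f x₀ := fun j y hy => hy.1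
  have hmemC : ∀ y ∈ basicClass f x₀, ∃ j, j < m ∧ y ∈ C j := by
    intro y hy
    obtain ⟨a, ha, hca⟩ := chainLen_of_chainRel ((hBchain y hy) α₀ hα₀).1
    refine ⟨a % m, Nat.mod_lt _ hm0, hy, ?_⟩
    intro α hα
    obtain ⟨a', ha', hca'⟩ := chainLen_of_chainRel
      ((hBchain y hy) (min α α₀) (by positivity)).1
    exact ⟨a', ha',
      hres y hy a' a ha' ha (chainLen_mono (min_le_right _ _) hca') hca,
      chainLen_mono (min_le_left _ _) hca'⟩
  have hCdisj : ∀ j j', j < m → j' < m → j ≠ j' → Disjoint (C j) (C j') := by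
    intro j j' hj hj' hne
    rw [Set.disjoint_left]
    intro y hyj hyj'
    obtain ⟨a, ha, haj, hca⟩ := hyj.2 α₀ hα₀
    obtain ⟨a', ha', haj', hca'⟩ := hyj'.2 α₀ hα₀
    exact hne (by rw [← haj, ← haj']; exact hres y hyj.1 a a' ha ha' hca hca')
  have hCclosed : ∀ j, IsClosed (C j) := by
    intro j
    rw [← closure_subset_iff_isClosed]
    intro y hy
    have hyB : y ∈ basicClass f x₀ :=
      closure_minimal (hCsub j) (basicClass_closed hf hsh hc hexp x₀) hy
    refine ⟨hyB, ?_⟩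
    intro α hα
    obtain ⟨y', hy', hd⟩ := Metric.mem_closure_iff.mp hy (α/2) (by linarith)
    obtain ⟨a, ha, haj, hca⟩ := hy'.2 (α/2) (by linarith)
    refine ⟨a, ha, haj, ?_⟩
    have hdy : dist y' y ≤ α/2 := by rw [dist_comm]; exact hd.le
    have h5 := chainLen_replace_end hca ha hdy
    exact chainLen_mono (by linarith) h5
  have hCsucc : ∀ j, f '' C j ⊆ C ((j+1) % m) := by
    rintro j y ⟨u, hu, rfl⟩
    refine ⟨?_, ?_⟩
    · rw [← basicClass_image hf hx₀]
      exact ⟨u, hu.1, rfl⟩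
    · intro α hα
      obtain ⟨a, ha, haj, hca⟩ := hu.2 α hα
      have hjm : j < m := haj ▸ Nat.mod_lt a hm0
      refine ⟨a + 1, by omega, ?_,
        chainLen_trans hca (chainLen_single (by simp; linarith))⟩
      have h1 : a ≡ j [MOD m] := by
        rw [Nat.ModEq, haj, Nat.mod_eq_of_lt hjm]
      exact h1.add_right 1
  have hCsucc' : ∀ j, j < m → C ((j+1) % m) ⊆ f '' C j := by
    intro j hj y hy
    have hyB := hy.1
    have h6 : y ∈ f '' basicClass f x₀ := by
      rw [basicClass_image hf hx₀]; exact hyB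
    obtain ⟨u, huB, rfl⟩ := h6
    obtain ⟨j'', hj'', huC⟩ := hmemC u huB
    have h7 : f u ∈ C ((j''+1) % m) := hCsucc j'' ⟨u, huC, rfl⟩
    have heq : (j''+1) % m = (j+1) % m := by
      by_contra hne
      have hd := hCdisj _ _ (Nat.mod_lt _ hm0) (Nat.mod_lt _ hm0) hne
      exact (Set.disjoint_left.mp hd h7) hy
    have h8 : j'' = j := mod_succ_inj hj'' hj heq
    exact ⟨u, h8 ▸ huC, rfl⟩
  have hCimg : ∀ j, j < m → f '' C j = C ((j+1) % m) :=
    fun j hj => Set.Subset.antisymm (hCsucc j) (hCsucc' j hj)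
  have hCiter : ∀ k : ℕ, ∀ j, j < m → f^[k] '' C j = C ((j + k) % m) := by
    intro k
    induction k with
    | zero =>
      intro j hj
      simp [Nat.mod_eq_of_lt hj]
    | succ k ih =>
      intro j hj
      have h9 : f^[k+1] '' C j = f '' (f^[k] '' C j) := by
        rw [← Set.image_comp, ← Function.iterate_succ']
      rw [h9, ih j hj, hCimg ((j+k) % m) (Nat.mod_lt _ hm0)]
      have h10 : (j+k) % m + 1 ≡ j + k + 1 [MOD m] := (Nat.mod_modEq (j+k) m).add_right 1
      have h11 : ((j+k) % m + 1) % m = (j+k+1) % m := h10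
      rw [h11, show j + (k+1) = j + k + 1 from by omega]
  have hCm : ∀ j, j < m → f^[m] '' C j = C j := by
    intro j hj
    rw [hCiter m j hj, Nat.add_mod_right, Nat.mod_eq_of_lt hj]
  have hCmemIter : ∀ j, j < m → ∀ s : ℕ, ∀ w ∈ C j, (f^[m])^[s] w ∈ C j := by
    intro j hj s
    induction s with
    | zero => intro w hw; simpa using hw
    | succ s ih =>
      intro w hw
      rw [Function.iterate_succ_apply']
      have h11 : f^[m] ((f^[m])^[s] w) ∈ f^[m] '' C j := ⟨_, ih w hw, rfl⟩
      rwa [hCm j hj] at h11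
  refine ⟨m, hm0, C, fun j _ => hCclosed j, fun j j' hj hj' => hCdisj j j' hj hj', ?_, hCimg,
    hCm, ?_⟩
  · apply Set.Subset.antisymm
    · intro y hy
      obtain ⟨j, hj, hyC⟩ := hmemC y hy
      exact Set.mem_biUnion (Finset.mem_range.mpr hj) hyC
    · intro y hy
      simp only [Set.mem_iUnion] at hy
      obtain ⟨j, -, hyC⟩ := hy
      exact hyC.1
  · -- mixing
    intro j hj U V hU hV hUne hVne
    obtain ⟨u, huU, huC⟩ := hUne
    obtain ⟨v, hvV, hvC⟩ := hVne
    have huB := huC.1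
    have hvB := hvC.1
    have hucr : ChainRecurrent f u := huB.1
    have hvcr : ChainRecurrent f v := hvB.1
    obtain ⟨ε₁, hε₁, hballU⟩ := Metric.isOpen_iff.mp hU u huU
    obtain ⟨ε₂, hε₂, hballV⟩ := Metric.isOpen_iff.mp hV v hvV
    set ε := min ε₁ ε₂ / 2 with hε
    have hε0 : 0 < ε := by positivity
    obtain ⟨δ, hδ, hconn⟩ := connect_full hf hsh hc hexp ε hε0
    set δ' := min δ α₀ with hδ'
    have hδ'0 : 0 < δ' := lt_min hδ hα₀
    obtain ⟨a, ha, hca⟩ := chainLen_of_chainRel ((hBchain u huB) δ' hδ'0).2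
    obtain ⟨b, hb, hbj, hcb⟩ := hvC.2 δ' hδ'0
    obtain ⟨a₀, ha₀, ha₀j, hca₀⟩ := huC.2 α₀ hα₀
    have hdab : m ∣ a + b := by
      have h1 : m ∣ a₀ + a := hloopdvd p hpB _ (by omega)
        (chainLen_trans hca₀ (chainLen_mono (min_le_right _ _) hca))
      have h2 : b ≡ a₀ [MOD m] := by rw [Nat.ModEq, hbj, ha₀j]
      have h3 : a + b ≡ a + a₀ [MOD m] := h2.add_left a
      have h4 : a + a₀ ≡ 0 [MOD m] := (Nat.modEq_zero_iff_dvd).mpr (by rwa [Nat.add_comm] at h1)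
      exact (Nat.modEq_zero_iff_dvd).mp (h3.trans h4)
    obtain ⟨A, hA⟩ := hdab
    obtain ⟨N₀, hN₀1, hN₀⟩ := (hαprop δ' hδ'0 (min_le_right _ _)).2
    refine ⟨A + N₀ + 1, ?_⟩
    intro n hn
    set t := n - A with ht
    have htN : N₀ ≤ t := by omega
    have hloop : ChainLen f δ' (m * t) p p := hN₀ t htN
    have hchain : ChainLen f δ' (a + (m * t + b)) u v :=
      chainLen_trans hca (chainLen_trans hloop hcb)
    have hlen : a + (m * t + b) = m * n := by
      have h12 : m * t + m * A = m * n := by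
        rw [← Nat.mul_add]
        congr 1
        omega
      omega
    rw [hlen] at hchain
    have hK : 0 < m * n := Nat.mul_pos hm0 (by omega)
    obtain ⟨z, ut, hz, hut, hut0, hutcr, hz0, hzK, hb2, hfw2⟩ :=
      hconn u v hucr hvcr (m*n) hK (chainLen_mono (min_le_left _ _) hchain)
    have hvu : ∀ α > 0, ChainRel f α v u := fun α hα =>
      chainRel_trans ((hBchain v hvB α hα).2) ((hBchain u huB α hα).1)
    obtain ⟨hzcr, hzeq⟩ := zero_mem_class hf hz hut hutcr hut0 hvcr hvu (m*n) hK hb2 hfw2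
    have hzB : z 0 ∈ basicClass f x₀ := ⟨hzcr, chainEquiv_trans huB.2 hzeq⟩
    have hzC : z 0 ∈ C j := by
      refine ⟨hzB, ?_⟩
      intro α hα
      obtain ⟨a₁, ha₁, ha₁j, hca₁⟩ := huC.2 α hα
      obtain ⟨N₁, L, hN₁L, hloopL, hcL⟩ := chain_orbit_to_zero hf hz hut hutcr hb2 hα hα₀
      rw [hut0] at hcL
      have hutB : ut (-(N₁:ℤ)) ∈ basicClass f x₀ := by
        refine ⟨hutcr _, chainEquiv_trans huB.2 ?_⟩
        have h13 := orbit_point_equiv hf hut hutcr N₁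
        rw [hut0] at h13
        exact h13
      have hmL : m ∣ L := hloopdvd _ hutB L (by omega) hloopL
      obtain ⟨k, hk⟩ := hmL
      refine ⟨a₁ + L, by omega, ?_, chainLen_trans hca₁ hcL⟩
      rw [hk, Nat.add_mul_mod_self_left]
      exact ha₁j
    have hzn : (f^[m])^[n] (z 0) = z ((m*n : ℕ) : ℤ) := by
      rw [← Function.iterate_mul]
      have h14 := fullOrbit_apply hz 0 (m*n)
      rw [zero_add] at h14
      exact h14.symm
    refine ⟨(f^[m])^[n] (z 0), ⟨z 0, ⟨?_, hzC⟩, rfl⟩, ?_, hCmemIter j hj n (z 0) hzC⟩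
    · apply hballU
      rw [Metric.mem_ball]
      have h15 := min_le_left ε₁ ε₂
      calc dist (z 0) u ≤ ε := hz0
        _ < ε₁ := by rw [hε]; linarith
    · rw [hzn]
      apply hballV
      rw [Metric.mem_ball]
      have h16 := min_le_right ε₁ ε₂
      calc dist (z ((m*n : ℕ):ℤ)) v ≤ ε := hzK
        _ < ε₂ := by rw [hε]; linarith

end SD

/-- Spectral decomposition theorem for bi-asymptotically `c`-expansive continuous surjections
with the shadowing property on compact metric spaces. -/
theorem spectral_decomposition {X : Type*} [MetricSpace X] [CompactSpace X]
    (f : X → X) (hf : Continuous f) (hsurj : Function.Surjective f)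
    (hexp : BiAsympCExpansive f) (hsh : Shadowing f) :
    ∃ (k : ℕ), 0 < k ∧ ∃ B : Fin k → Set X,
      (∀ i, IsClosed (B i)) ∧
      (∀ i, f '' B i = B i) ∧
      (∀ i j, i ≠ j → Disjoint (B i) (B j)) ∧
      {x | NonWandering f x} = ⋃ i, B i ∧
      (∀ i, TopTransOn f (B i)) ∧
      (∀ i, ∃ m : ℕ, 0 < m ∧ ∃ C : ℕ → Set X,
        (∀ j < m, IsClosed (C j)) ∧
        (∀ j j', j < m → j' < m → j ≠ j' → Disjoint (C j) (C j')) ∧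
        B i = ⋃ j ∈ Finset.range m, C j ∧
        (∀ j < m, f '' C j = C ((j + 1) % m)) ∧
        (∀ j < m, f^[m] '' C j = C j) ∧
        (∀ j < m, TopMixingOn f^[m] (C j))) := by
  obtain ⟨c, hc, hexpc⟩ := hexp
  obtain ⟨k, hk, B, hBgood, hBdisj, hBunion⟩ := SD.classes_decomp hf hsh hc hexpc
  have hΩ : {x : X | NonWandering f x} = {x : X | ChainRecurrent f x} := by
    ext x
    exact ⟨fun h => SD.nonWandering_chainRecurrent hf h,
      fun h => SD.chainRecurrent_nonWandering hsh h⟩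
  refine ⟨k, hk, B, ?_, ?_, hBdisj, ?_, ?_, ?_⟩
  · intro i
    rcases hBgood i with h | ⟨x, hx, -, hBe⟩
    · rw [h]; exact isClosed_empty
    · rw [hBe]; exact SD.basicClass_closed hf hsh hc hexpc x
  · intro i
    rcases hBgood i with h | ⟨x, hx, -, hBe⟩
    · rw [h]; simp
    · rw [hBe]; exact SD.basicClass_image hf hx
  · rw [hΩ, hBunion]
  · intro i
    rcases hBgood i with h | ⟨x, hx, -, hBe⟩
    · rw [h]
      intro U V _ _ h1 _
      simp at h1
    · rw [hBe]
      exact SD.class_topTrans hf hsh hc hexpc hx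
  · intro i
    rcases hBgood i with h | ⟨x, hx, -, hBe⟩
    · refine ⟨1, one_pos, fun _ => ∅, ?_, ?_, ?_, ?_, ?_, ?_⟩
      · intro j _; exact isClosed_empty
      · intro j j' _ _ _; simp
      · rw [h]; simp
      · intro j _; simp
      · intro j _; simp
      · intro j _
        intro U V _ _ h1 _
        simp at h1
    · obtain ⟨m, hm, C, h1, h2, h3, h4, h5, h6⟩ := SD.class_decomp_mixing hf hsh hc hexpc hx
      exact ⟨m, hm, C, h1, h2, by rw [hBe]; exact h3, h4, h5, h6⟩
end

section
/- There exists a compact metric space X and an N-expansive homeomorphism f of X with the shadowing property (for any fixed N ≥ 2) that is not asymptotically expansive, and hence not bi-asymptotically c-expansive. -/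
open Filter Topology Function

namespace NExpC

def Sig : Type := ℤ → Bool

namespace Sig

noncomputable def w (n : ℤ) : ℝ := (1/2 : ℝ) ^ n.natAbs / 4

lemma w_pos (n : ℤ) : 0 < w n := by unfold w; positivity

lemma w_le (n : ℤ) : w n ≤ 1/4 := by
  have : (1/2:ℝ) ^ n.natAbs ≤ 1 := pow_le_one₀ (by norm_num) (by norm_num)
  unfold w; linarith

lemma w_zero : w 0 = 1/4 := by norm_num [w]

lemma w_ge {m : ℕ} {n : ℤ} (h : n.natAbs ≤ m) : (1/2:ℝ)^m / 4 ≤ w n := by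
  unfold w
  have := pow_le_pow_of_le_one (by norm_num : (0:ℝ) ≤ 1/2) (by norm_num : (1/2:ℝ) ≤ 1) h
  linarith

lemma w_anti {m : ℕ} {n : ℤ} (h : m ≤ n.natAbs) : w n ≤ (1/2:ℝ)^m / 4 := by
  unfold w
  have := pow_le_pow_of_le_one (by norm_num : (0:ℝ) ≤ 1/2) (by norm_num : (1/2:ℝ) ≤ 1) h
  linarith

noncomputable def SD (x y : Sig) (n : ℤ) : ℝ := if x n = y n then 0 else w n

lemma SD_nonneg (x y : Sig) (n : ℤ) : 0 ≤ SD x y n := by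
  unfold SD; split
  · exact le_refl 0
  · exact (w_pos n).le

lemma SD_le (x y : Sig) (n : ℤ) : SD x y n ≤ 1/4 := by
  unfold SD; split
  · norm_num
  · exact w_le n

lemma bddSD (x y : Sig) : BddAbove (Set.range (SD x y)) :=
  ⟨1/4, by rintro _ ⟨n, rfl⟩; exact SD_le x y n⟩

noncomputable def D (x y : Sig) : ℝ := ⨆ n : ℤ, SD x y n

lemma SD_le_D (x y : Sig) (n : ℤ) : SD x y n ≤ D x y := le_ciSup (bddSD x y) n

lemma D_nonneg (x y : Sig) : 0 ≤ D x y := le_trans (SD_nonneg x y 0) (SD_le_D x y 0)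

lemma D_le {x y : Sig} {a : ℝ} (h : ∀ n, SD x y n ≤ a) : D x y ≤ a := ciSup_le h

lemma w_le_D {x y : Sig} {n : ℤ} (h : x n ≠ y n) : w n ≤ D x y := by
  have := SD_le_D x y n
  unfold SD at this; rwa [if_neg h] at this

lemma eq_of_D_lt {x y : Sig} {n : ℤ} {d : ℝ} (h : D x y ≤ d) (hd : d < w n) : x n = y n := by
  by_contra hn
  exact absurd (le_trans (w_le_D hn) h) (not_le.mpr hd)

lemma SD_triangle (x y z : Sig) (n : ℤ) : SD x z n ≤ SD x y n + SD y z n := by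
  unfold SD
  by_cases h1 : x n = y n <;> by_cases h2 : y n = z n <;>
      split <;> first
    | positivity
    | linarith [w_pos n]
    | (exfalso; first | exact ‹¬ x n = z n› (h1.trans h2) | tauto)


noncomputable instance : MetricSpace Sig where
  dist := D
  dist_self x := by
    have h : ∀ n : ℤ, SD x x n = 0 := fun n => by unfold SD; simp
    show D x x = 0
    unfold D
    simp only [h]
    exact ciSup_const
  dist_comm x y := by
    show D x y = D y x
    unfold D
    exact iSup_congr fun n => by unfold SD; simp [eq_comm]
  dist_triangle x y z :=
    ciSup_le fun n => (SD_triangle x y z n).trans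
      (add_le_add (SD_le_D x y n) (SD_le_D y z n))
  eq_of_dist_eq_zero := by
    intro x y h
    funext n
    by_contra hn
    have h1 := w_le_D hn
    have h2 : D x y = 0 := h
    have := w_pos n
    linarith

lemma dist_def (x y : Sig) : dist x y = D x y := rfl

lemma D_le_of_window {x y : Sig} {M : ℕ} (h : ∀ m : ℤ, m.natAbs ≤ M → x m = y m) :
    D x y ≤ (1/2:ℝ)^M / 8 := by
  apply D_le
  intro n
  unfold SD
  split
  · positivity
  · have hM : M + 1 ≤ n.natAbs := by
      by_contra hc
      exact ‹¬ x n = y n› (h n (by omega))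
    have := w_anti hM
    calc w n ≤ (1/2:ℝ)^(M+1)/4 := this
    _ = (1/2:ℝ)^M/8 := by ring

def ofFun (x : ℤ → Bool) : Sig := x

lemma cont_ofFun : Continuous ofFun := by
  rw [continuous_iff_continuousAt]
  intro x
  apply Metric.tendsto_nhds.mpr
  intro ε hε
  obtain ⟨M, hM⟩ : ∃ M : ℕ, (1/2:ℝ)^M/8 < ε := by
    obtain ⟨M, hM⟩ := exists_pow_lt_of_lt_one hε (by norm_num : (1/2:ℝ) < 1)
    exact ⟨M, by nlinarith [pow_pos (by norm_num : (0:ℝ) < 1/2) M]⟩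
  have hev : ∀ᶠ y in 𝓝 x, ∀ m ∈ Finset.Icc (-(M:ℤ)) (M:ℤ), y m = x m := by
    rw [Filter.eventually_all_finset]
    intro m _
    have hop : IsOpen {y : ℤ → Bool | y m = x m} := by
      have : {y : ℤ → Bool | y m = x m} = (fun y : ℤ → Bool => y m) ⁻¹' {x m} := by
        ext y; simp
      rw [this]
      exact IsOpen.preimage (continuous_apply m) (isOpen_discrete {x m})
    exact Filter.eventually_of_mem (hop.mem_nhds rfl) fun y hy => hy
  refine hev.mono fun y hy => ?_
  have hw : ∀ m : ℤ, m.natAbs ≤ M → (ofFun y) m = (ofFun x) m := by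
    intro m hm
    exact hy m (Finset.mem_Icc.mpr (by omega))
  calc dist (ofFun y) (ofFun x) ≤ (1/2:ℝ)^M/8 := D_le_of_window hw
  _ < ε := hM

instance : CompactSpace Sig := by
  constructor
  have h : Set.range ofFun = Set.univ := Set.range_eq_univ.mpr fun y => ⟨y, rfl⟩
  rw [← h]
  exact isCompact_range cont_ofFun

end Sig

open Sig

def sh : Sig ≃ Sig where
  toFun x := fun n => x (n + 1)
  invFun x := fun n => x (n - 1)
  left_inv x := funext fun n => congrArg x (by ring)
  right_inv x := funext fun n => congrArg x (by ring)

lemma sh_apply (x : Sig) (n : ℤ) : sh x n = x (n + 1) := rfl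
lemma sh_symm_apply (x : Sig) (n : ℤ) : sh.symm x n = x (n - 1) := rfl

lemma w_le_two_w_succ (n : ℤ) : w n ≤ 2 * w (n + 1) := by
  unfold w
  have h : (n+1).natAbs ≤ n.natAbs + 1 := by omega
  have := pow_le_pow_of_le_one (by norm_num : (0:ℝ) ≤ 1/2) (by norm_num : (1/2:ℝ) ≤ 1) h
  have h2 : (1/2:ℝ)^(n.natAbs + 1) = (1/2:ℝ)^(n.natAbs) * (1/2) := by ring
  rw [h2] at this
  linarith

lemma w_le_two_w_pred (n : ℤ) : w n ≤ 2 * w (n - 1) := by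
  unfold w
  have h : (n-1).natAbs ≤ n.natAbs + 1 := by omega
  have := pow_le_pow_of_le_one (by norm_num : (0:ℝ) ≤ 1/2) (by norm_num : (1/2:ℝ) ≤ 1) h
  have h2 : (1/2:ℝ)^(n.natAbs + 1) = (1/2:ℝ)^(n.natAbs) * (1/2) := by ring
  rw [h2] at this
  linarith

lemma D_sh_le (x y : Sig) : D (sh x) (sh y) ≤ 2 * D x y := by
  apply D_le
  intro n
  have h1 : SD (sh x) (sh y) n ≤ 2 * SD x y (n + 1) := by
    unfold SD
    rw [sh_apply, sh_apply]
    split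
    · simp
    · exact w_le_two_w_succ n
  calc SD (sh x) (sh y) n ≤ 2 * SD x y (n+1) := h1
  _ ≤ 2 * D x y := by linarith [SD_le_D x y (n+1)]

lemma D_sh_symm_le (x y : Sig) : D (sh.symm x) (sh.symm y) ≤ 2 * D x y := by
  apply D_le
  intro n
  have h1 : SD (sh.symm x) (sh.symm y) n ≤ 2 * SD x y (n - 1) := by
    unfold SD
    rw [sh_symm_apply, sh_symm_apply]
    split
    · simp
    · exact w_le_two_w_pred n
  calc SD (sh.symm x) (sh.symm y) n ≤ 2 * SD x y (n-1) := h1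
  _ ≤ 2 * D x y := by linarith [SD_le_D x y (n-1)]

lemma cont_sh : Continuous sh :=
  LipschitzWith.continuous (K := 2) (LipschitzWith.of_dist_le_mul fun x y => by
    rw [dist_def, dist_def]; simpa using D_sh_le x y)

lemma cont_sh_symm : Continuous sh.symm :=
  LipschitzWith.continuous (K := 2) (LipschitzWith.of_dist_le_mul fun x y => by
    rw [dist_def, dist_def]; simpa using D_sh_symm_le x y)


def q (k : ℕ) (j : ℤ) : Sig := fun n => decide (((k:ℤ)+1) ∣ (n + j))

lemma q_apply (k : ℕ) (j n : ℤ) : q k j n = decide (((k:ℤ)+1) ∣ (n + j)) := rfl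

lemma sh_q (k : ℕ) (j : ℤ) : sh (q k j) = q k (j + 1) :=
  funext fun n => congrArg (fun m => decide (((k:ℤ)+1) ∣ m)) (by ring)

lemma sh_symm_q (k : ℕ) (j : ℤ) : sh.symm (q k j) = q k (j - 1) :=
  funext fun n => congrArg (fun m => decide (((k:ℤ)+1) ∣ m)) (by ring)

lemma q_eq_of_dvd {k : ℕ} {j j' : ℤ} (h : ((k:ℤ)+1) ∣ (j - j')) : q k j = q k j' := by
  funext n
  rw [q_apply, q_apply, decide_eq_decide]
  constructor
  · intro h2
    have h3 := dvd_sub h2 h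
    have h4 : n + j - (j - j') = n + j' := by ring
    rwa [h4] at h3
  · intro h2
    have h3 := dvd_add h2 h
    have h4 : n + j' + (j - j') = n + j := by ring
    rwa [h4] at h3

def O (k : ℕ) : Set Sig := Set.range (q k)

lemma sh_mem_O {k : ℕ} {x : Sig} (h : x ∈ O k) : sh x ∈ O k := by
  obtain ⟨j, rfl⟩ := h; exact ⟨j + 1, (sh_q k j).symm⟩

lemma sh_symm_mem_O {k : ℕ} {x : Sig} (h : x ∈ O k) : sh.symm x ∈ O k := by
  obtain ⟨j, rfl⟩ := h; exact ⟨j - 1, (sh_symm_q k j).symm⟩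

lemma O_finite (k : ℕ) : (O k).Finite := by
  have hsub : O k ⊆ Set.range (fun i : Fin (k+1) => q k (i : ℤ)) := by
    rintro _ ⟨j, rfl⟩
    have h0 : 0 ≤ j % ((k:ℤ)+1) := Int.emod_nonneg j (by omega)
    have h1 : j % ((k:ℤ)+1) < (k:ℤ)+1 := Int.emod_lt_of_pos j (by omega)
    refine ⟨⟨(j % ((k:ℤ)+1)).toNat, by omega⟩, ?_⟩
    have hc : (((j % ((k:ℤ)+1)).toNat : ℤ)) = j % ((k:ℤ)+1) := by omega
    show q k (((j % ((k:ℤ)+1)).toNat : ℤ)) = q k j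
    rw [hc]
    exact q_eq_of_dvd ⟨-(j / ((k:ℤ)+1)), by rw [Int.emod_def]; ring⟩
  exact (Set.finite_range _).subset hsub


lemma O_disjoint {k k' : ℕ} {j j' : ℤ} (h : q k j = q k' j') : k = k' := by
  have h1 : ∀ n : ℤ, (((k:ℤ)+1) ∣ (n + j)) ↔ (((k':ℤ)+1) ∣ (n + j')) := by
    intro n
    have := congrFun h n
    rw [q_apply, q_apply, decide_eq_decide] at this
    exact this
  have key : ∀ (a b : ℕ) (i i' : ℤ), (∀ n : ℤ, (((a:ℤ)+1) ∣ (n + i)) ↔ (((b:ℤ)+1) ∣ (n + i'))) →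
      ((b:ℤ)+1) ∣ ((a:ℤ)+1) := by
    intro a b i i' hab
    have a1 : ((b:ℤ)+1) ∣ (-i + i') := (hab (-i)).1 ⟨0, by ring⟩
    have a2 : ((b:ℤ)+1) ∣ (((a:ℤ)+1) - i + i') := (hab (((a:ℤ)+1) - i)).1 ⟨1, by ring⟩
    have h3 := dvd_sub a2 a1
    have h4 : ((a:ℤ)+1) - i + i' - (-i + i') = ((a:ℤ)+1) := by ring
    rwa [h4] at h3
  have d1 := key k k' j j' h1
  have d2 := key k' k j' j (fun n => (h1 n).symm)
  have := Int.dvd_antisymm (by omega) (by omega) d1 d2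
  omega

lemma O_sep {k : ℕ} {u v : Sig} (hu : u ∈ O k) (hv : v ∈ O k) (hne : u ≠ v) :
    (1/2:ℝ)^k/4 ≤ D u v := by
  obtain ⟨j, rfl⟩ := hu
  obtain ⟨j', rfl⟩ := hv
  have hnd : ¬ ((k:ℤ)+1) ∣ (j - j') := fun h => hne (q_eq_of_dvd h)
  set n₀ := (-j) % ((k:ℤ)+1) with hn₀
  have h0 : 0 ≤ n₀ := Int.emod_nonneg _ (by omega)
  have h1 : n₀ < (k:ℤ)+1 := Int.emod_lt_of_pos _ (by omega)
  have e1 : ((k:ℤ)+1) ∣ (n₀ + j) := ⟨-((-j) / ((k:ℤ)+1)), by rw [hn₀, Int.emod_def]; ring⟩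
  have e2 : ¬ ((k:ℤ)+1) ∣ (n₀ + j') := by
    intro h2
    apply hnd
    have h3 := dvd_sub e1 h2
    have h4 : n₀ + j - (n₀ + j') = j - j' := by ring
    rwa [h4] at h3
  have hne0 : q k j n₀ ≠ q k j' n₀ := by
    rw [q_apply, q_apply]
    simp [e1, e2]
  have hwD := w_le_D hne0
  have hw : (1/2:ℝ)^k/4 ≤ w n₀ := w_ge (by omega)
  linarith

noncomputable def r (k : ℕ) : ℝ := 1/(8*((k:ℝ)+1))

lemma r_pos (k : ℕ) : 0 < r k := by unfold r; positivity

lemma r_le (k : ℕ) : r k ≤ 1/8 := by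
  unfold r
  rw [div_le_div_iff₀ (by positivity) (by norm_num)]
  have : (0:ℝ) ≤ (k:ℝ) := Nat.cast_nonneg k
  linarith

lemma r_inj {k k' : ℕ} (h : r k = r k') : k = k' := by
  have hk : (8*((k:ℝ)+1)) ≠ 0 := by positivity
  have hk' : (8*((k':ℝ)+1)) ≠ 0 := by positivity
  unfold r at h
  rw [div_eq_div_iff hk hk'] at h
  have : (k:ℝ) = (k':ℝ) := by linarith
  exact_mod_cast this

def Xs : Set (Sig × ℝ) := {p | p.2 = 0 ∨ ∃ k, p.2 = r k ∧ p.1 ∈ O k}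

lemma base_mem (x : Sig) : (x, (0:ℝ)) ∈ Xs := Or.inl rfl

lemma snd_nonneg {p : Sig × ℝ} (h : p ∈ Xs) : 0 ≤ p.2 := by
  rcases h with h | ⟨k, hk, _⟩
  · rw [h]
  · rw [hk]; exact (r_pos k).le

lemma snd_le {p : Sig × ℝ} (h : p ∈ Xs) : p.2 ≤ 1/8 := by
  rcases h with h | ⟨k, hk, _⟩
  · rw [h]; norm_num
  · rw [hk]; exact r_le k

lemma Xs_shift {p : Sig × ℝ} (h : p ∈ Xs) : (sh p.1, p.2) ∈ Xs := by
  rcases h with h | ⟨k, hk, hm⟩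
  · exact Or.inl h
  · exact Or.inr ⟨k, hk, sh_mem_O hm⟩

lemma Xs_shift_symm {p : Sig × ℝ} (h : p ∈ Xs) : (sh.symm p.1, p.2) ∈ Xs := by
  rcases h with h | ⟨k, hk, hm⟩
  · exact Or.inl h
  · exact Or.inr ⟨k, hk, sh_symm_mem_O hm⟩


lemma Xs_seqClosed : IsSeqClosed Xs := by
  intro x p hx hlim
  by_cases hp : p.2 = 0
  · exact Or.inl hp
  · have ht : Tendsto (fun n => (x n).2) atTop (𝓝 p.2) :=
      (continuous_snd.continuousAt).tendsto.comp hlim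
    have hfst : Tendsto (fun n => (x n).1) atTop (𝓝 p.1) :=
      (continuous_fst.continuousAt).tendsto.comp hlim
    have hge : 0 ≤ p.2 := ge_of_tendsto' ht fun n => snd_nonneg (hx n)
    have hppos : 0 < p.2 := lt_of_le_of_ne hge (Ne.symm hp)
    set W : Set ℝ := {v : ℝ | (∃ k, v = r k) ∧ p.2/2 ≤ v} with hW
    have hWfin : W.Finite := by
      set K := ⌈1/(4*p.2)⌉₊ with hK
      have hsub : W ⊆ r '' (Set.Iic K) := by
        rintro v ⟨⟨k, rfl⟩, hv⟩
        refine ⟨k, ?_, rfl⟩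
        simp only [Set.mem_Iic]
        by_contra hkK
        push_neg at hkK
        have h1 : (K:ℝ) < (k:ℝ) := by exact_mod_cast hkK
        have h2 : 1/(4*p.2) ≤ (K:ℝ) := Nat.le_ceil _
        have h3 : r k < 1/(8*(1/(4*p.2)+1)) := by
          unfold r
          apply div_lt_div_of_pos_left (by norm_num) (by positivity)
          have : (0:ℝ) < 4*p.2 := by positivity
          nlinarith
        have h4 : 1/(8*(1/(4*p.2)+1)) ≤ p.2/2 := by
          rw [div_le_div_iff₀ (by positivity) (by norm_num)]
          have h5 : (0:ℝ) < p.2 := hppos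
          have h6 : 1/(4*p.2) * (4*p.2) = 1 := by field_simp
          nlinarith
        linarith
      exact ((Set.finite_Iic K).image r).subset hsub
    have hevW : ∀ᶠ n in atTop, (x n).2 ∈ W := by
      have hev := (Metric.tendsto_nhds.mp ht) (p.2/2) (by positivity)
      refine hev.mono fun n hn => ?_
      rw [Real.dist_eq] at hn
      have hge2 : p.2/2 ≤ (x n).2 := by
        have := abs_lt.mp hn
        linarith [this.1]
      rcases hx n with h0 | ⟨k, hk, _⟩
      · exfalso; rw [h0] at hge2; linarith
      · exact ⟨⟨k, hk⟩, hge2⟩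
    have hfreq : ∃ᶠ n in atTop, (x n).2 = p.2 := by
      by_contra hc
      rw [Filter.not_frequently] at hc
      have hev2 : ∀ᶠ n in atTop, (x n).2 ∈ W \ {p.2} := by
        filter_upwards [hevW, hc] with n h1 h2
        exact ⟨h1, h2⟩
      have hcl : IsClosed (W \ {p.2}) := ((hWfin.subset Set.diff_subset).isClosed)
      have := hcl.mem_of_tendsto ht hev2
      exact this.2 rfl
    obtain ⟨n₁, hn₁, hn₁W⟩ := (hfreq.and_eventually hevW).exists
    obtain ⟨⟨k, hk⟩, -⟩ := hn₁W
    rw [hn₁] at hk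
    have hfreqO : ∃ᶠ n in atTop, (x n).1 ∈ O k := by
      refine hfreq.mono fun n hn => ?_
      rcases hx n with h0 | ⟨k', hk', hm'⟩
      · exfalso; rw [h0] at hn; exact hp hn.symm
      · have : r k' = r k := by rw [← hk', hn, hk]
        rwa [r_inj this] at hm'
    have hpmem : p.1 ∈ O k := by
      have := mem_closure_of_frequently_of_tendsto hfreqO hfst
      rwa [(O_finite k).isClosed.closure_eq] at this
    exact Or.inr ⟨k, hk, hpmem⟩

lemma Xs_isClosed : IsClosed Xs := Xs_seqClosed.isClosed

lemma Xs_isCompact : IsCompact Xs := by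
  have hsub : Xs ⊆ (Set.univ : Set Sig) ×ˢ Set.Icc (0:ℝ) (1/8) := by
    intro p hp
    exact ⟨Set.mem_univ _, snd_nonneg hp, snd_le hp⟩
  exact (IsCompact.prod isCompact_univ isCompact_Icc).of_isClosed_subset Xs_isClosed hsub

instance : CompactSpace ↥Xs := isCompact_iff_compactSpace.1 Xs_isCompact

noncomputable def fX : ↥Xs ≃ₜ ↥Xs where
  toFun z := ⟨(sh z.1.1, z.1.2), Xs_shift z.2⟩
  invFun z := ⟨(sh.symm z.1.1, z.1.2), Xs_shift_symm z.2⟩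
  left_inv z := by
    apply Subtype.ext
    dsimp
    rw [Equiv.symm_apply_apply]
  right_inv z := by
    apply Subtype.ext
    dsimp
    rw [Equiv.apply_symm_apply]
  continuous_toFun := by
    apply Continuous.subtype_mk
    exact (cont_sh.comp (continuous_subtype_val.fst)).prodMk (continuous_subtype_val.snd)
  continuous_invFun := by
    apply Continuous.subtype_mk
    exact (cont_sh_symm.comp (continuous_subtype_val.fst)).prodMk (continuous_subtype_val.snd)

lemma dist_X (z z' : ↥Xs) : dist z z' = max (D z.1.1 z'.1.1) |z.1.2 - z'.1.2| := by
  rw [Subtype.dist_eq, Prod.dist_eq, Real.dist_eq]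
  rfl


lemma fX_apply (z : ↥Xs) : (fX z).1 = (sh z.1.1, z.1.2) := rfl

lemma iter_spec (n : ℕ) (z : ↥Xs) :
    (((⇑fX)^[n]) z).1.2 = z.1.2 ∧ ∀ m : ℤ, (((⇑fX)^[n]) z).1.1 m = z.1.1 (m + n) := by
  induction n with
  | zero => exact ⟨rfl, fun m => congrArg z.1.1 (by simp)⟩
  | succ n ih =>
    rw [Function.iterate_succ_apply']
    constructor
    · exact ih.1
    · intro m
      have h1 : (fX ((⇑fX)^[n] z)).1.1 m = ((⇑fX)^[n] z).1.1 (m + 1) := rfl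
      rw [h1, ih.2 (m+1)]
      exact congrArg z.1.1 (by push_cast; ring)

lemma zpow_spec (n : ℤ) : ∀ z : ↥Xs,
    ((fX.toEquiv ^ n) z).1.2 = z.1.2 ∧ ∀ m : ℤ, ((fX.toEquiv ^ n) z).1.1 m = z.1.1 (m + n) := by
  induction n using Int.induction_on with
  | zero => exact fun z => ⟨rfl, fun m => congrArg z.1.1 (by simp)⟩
  | succ n ih =>
    intro z
    have hz : (fX.toEquiv ^ ((n:ℤ) + 1)) z = (fX.toEquiv ^ (n:ℤ)) (fX.toEquiv z) := by
      rw [zpow_add_one]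
      rfl
    rw [hz]
    obtain ⟨h1, h2⟩ := ih (fX.toEquiv z)
    refine ⟨h1.trans rfl, fun m => ?_⟩
    rw [h2 m]
    have h3 : (fX.toEquiv z).1.1 (m + n) = z.1.1 (m + n + 1) := rfl
    rw [h3]
    exact congrArg z.1.1 (by ring)
  | pred n ih =>
    intro z
    have hz : (fX.toEquiv ^ (-(n:ℤ) - 1)) z = (fX.toEquiv ^ (-(n:ℤ))) (fX.toEquiv⁻¹ z) := by
      rw [zpow_sub_one]
      rfl
    rw [hz]
    obtain ⟨h1, h2⟩ := ih (fX.toEquiv⁻¹ z)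
    have hinv : (fX.toEquiv⁻¹ z) = fX.symm z := rfl
    refine ⟨h1.trans rfl, fun m => ?_⟩
    rw [h2 m]
    have h3 : (fX.toEquiv⁻¹ z).1.1 (m + -(n:ℤ)) = z.1.1 (m + -(n:ℤ) - 1) := rfl
    rw [h3]
    exact congrArg z.1.1 (by ring)


lemma base_rigid (z y : ↥Xs)
    (hy : ∀ n : ℤ, dist ((fX.toEquiv ^ n) z) ((fX.toEquiv ^ n) y) ≤ 1/8) :
    z.1.1 = y.1.1 := by
  funext m
  by_contra hm
  have hd := hy m
  rw [dist_X] at hd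
  have hD : D ((fX.toEquiv ^ m) z).1.1 ((fX.toEquiv ^ m) y).1.1 ≤ 1/8 :=
    le_trans (le_max_left _ _) hd
  have hzm : ((fX.toEquiv ^ m) z).1.1 0 = z.1.1 m := by
    rw [(zpow_spec m z).2 0]
    exact congrArg z.1.1 (by ring)
  have hym : ((fX.toEquiv ^ m) y).1.1 0 = y.1.1 m := by
    rw [(zpow_spec m y).2 0]
    exact congrArg y.1.1 (by ring)
  have hne : ((fX.toEquiv ^ m) z).1.1 0 ≠ ((fX.toEquiv ^ m) y).1.1 0 := by
    rw [hzm, hym]; exact hm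
  have hwd := w_le_D hne
  rw [w_zero] at hwd
  linarith

lemma part1 (N : ℕ) (hN : 2 ≤ N) (z : ↥Xs) :
    ({y : ↥Xs | ∀ n : ℤ, dist ((fX.toEquiv ^ n) z) ((fX.toEquiv ^ n) y) ≤ 1/8}).Finite ∧
    ({y : ↥Xs | ∀ n : ℤ, dist ((fX.toEquiv ^ n) z) ((fX.toEquiv ^ n) y) ≤ 1/8}).ncard ≤ N := by
  set Γ := {y : ↥Xs | ∀ n : ℤ, dist ((fX.toEquiv ^ n) z) ((fX.toEquiv ^ n) y) ≤ 1/8} with hΓ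
  have key : ∃ a b : ↥Xs, Γ ⊆ {a, b} := by
    by_cases hk : ∃ k, z.1.1 ∈ O k
    · obtain ⟨k, hkm⟩ := hk
      refine ⟨⟨(z.1.1, 0), Or.inl rfl⟩, ⟨(z.1.1, r k), Or.inr ⟨k, rfl, hkm⟩⟩, ?_⟩
      intro y hy
      have hb := base_rigid z y hy
      rcases y.2 with h0 | ⟨k', hk', hm'⟩
      · left
        apply Subtype.ext
        have : y.1 = (y.1.1, y.1.2) := rfl
        rw [this, ← hb, h0]
      · right
        apply Subtype.ext
        have heq : k' = k := by
          rw [← hb] at hm'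
          obtain ⟨j, hj⟩ := hm'
          obtain ⟨j', hj'⟩ := hkm
          exact O_disjoint (hj.trans hj'.symm)
        have : y.1 = (y.1.1, y.1.2) := rfl
        rw [this, ← hb, hk', heq]
    · refine ⟨⟨(z.1.1, 0), Or.inl rfl⟩, ⟨(z.1.1, 0), Or.inl rfl⟩, ?_⟩
      intro y hy
      have hb := base_rigid z y hy
      rcases y.2 with h0 | ⟨k', hk', hm'⟩
      · left
        apply Subtype.ext
        have : y.1 = (y.1.1, y.1.2) := rfl
        rw [this, ← hb, h0]
      · exfalso
        rw [← hb] at hm'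
        exact hk ⟨k', hm'⟩
  obtain ⟨a, b, hsub⟩ := key
  have hfin : Γ.Finite := (((Set.finite_singleton b).insert a)).subset hsub
  refine ⟨hfin, ?_⟩
  have h1 : Γ.ncard ≤ ({a, b} : Set ↥Xs).ncard :=
    Set.ncard_le_ncard hsub (((Set.finite_singleton b).insert a))
  have h2 : ({a, b} : Set ↥Xs).ncard ≤ 2 := by
    calc ({a, b} : Set ↥Xs).ncard ≤ ({b} : Set ↥Xs).ncard + 1 := Set.ncard_insert_le a {b}
    _ = 2 := by rw [Set.ncard_singleton]
  omega


lemma D_self (u : Sig) : D u u = 0 := by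
  rw [← dist_def]; exact dist_self u

lemma dist_zpow_pair (x y : ↥Xs) (hb : x.1.1 = y.1.1) (n : ℤ) :
    dist ((fX.toEquiv ^ n) x) ((fX.toEquiv ^ n) y) = |x.1.2 - y.1.2| := by
  rw [dist_X, (zpow_spec n x).1, (zpow_spec n y).1]
  have hbase : ((fX.toEquiv ^ n) x).1.1 = ((fX.toEquiv ^ n) y).1.1 := by
    funext m
    rw [(zpow_spec n x).2 m, (zpow_spec n y).2 m, hb]
  rw [hbase, D_self]
  exact max_eq_right (abs_nonneg _)

lemma dist_iter_pair (x y : ↥Xs) (hb : x.1.1 = y.1.1) (n : ℕ) :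
    dist ((⇑fX)^[n] x) ((⇑fX)^[n] y) = |x.1.2 - y.1.2| := by
  rw [dist_X, (iter_spec n x).1, (iter_spec n y).1]
  have hbase : ((⇑fX)^[n] x).1.1 = ((⇑fX)^[n] y).1.1 := by
    funext m
    rw [(iter_spec n x).2 m, (iter_spec n y).2 m, hb]
  rw [hbase, D_self]
  exact max_eq_right (abs_nonneg _)

lemma exists_r_le {c : ℝ} (hc : 0 < c) : ∃ k : ℕ, r k ≤ c := by
  refine ⟨⌈1/(8*c)⌉₊, ?_⟩
  have h1 : 1/(8*c) ≤ (⌈1/(8*c)⌉₊ : ℝ) := Nat.le_ceil _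
  unfold r
  rw [div_le_iff₀ (by positivity)]
  have h2 : 1/(8*c) * (8*c) = 1 := by field_simp
  nlinarith [Nat.cast_nonneg (α := ℝ) ⌈1/(8*c)⌉₊]

lemma part3 : ¬ ∃ c > (0:ℝ), AsympExpWith (⇑fX) c := by
  rintro ⟨c, hc, hA⟩
  obtain ⟨k, hk⟩ := exists_r_le hc
  set x : ↥Xs := ⟨(q k 0, 0), base_mem _⟩ with hx
  set y : ↥Xs := ⟨(q k 0, r k), Or.inr ⟨k, rfl, ⟨0, rfl⟩⟩⟩ with hy
  have hd : ∀ n : ℕ, dist ((⇑fX)^[n] x) ((⇑fX)^[n] y) = r k := by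
    intro n
    rw [dist_iter_pair x y rfl n]
    show |0 - r k| = r k
    rw [zero_sub, abs_neg, abs_of_pos (r_pos k)]
  have ht := hA x y (fun n => by rw [hd n]; exact hk)
  have heq : (fun n : ℕ => dist ((⇑fX)^[n] x) ((⇑fX)^[n] y)) = fun _ => r k := funext hd
  rw [heq] at ht
  have := tendsto_nhds_unique ht tendsto_const_nhds
  exact absurd this.symm (r_pos k).ne'

lemma part4 : ¬ BiAsympCExpansive (⇑fX) := by
  rintro ⟨c, hc, H1, -⟩
  obtain ⟨k, hk⟩ := exists_r_le hc
  set x : ↥Xs := ⟨(q k 0, 0), base_mem _⟩ with hx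
  set y : ↥Xs := ⟨(q k 0, r k), Or.inr ⟨k, rfl, ⟨0, rfl⟩⟩⟩ with hy
  set xo : ℤ → ↥Xs := fun n => (fX.toEquiv ^ n) x with hxo
  set yo : ℤ → ↥Xs := fun n => (fX.toEquiv ^ n) y with hyo
  have horb : ∀ z : ↥Xs, FullOrbit (⇑fX) (fun n => (fX.toEquiv ^ n) z) := by
    intro z n
    show ⇑fX ((fX.toEquiv ^ n) z) = (fX.toEquiv ^ (n+1)) z
    have h1 : fX.toEquiv ^ (n + 1) = fX.toEquiv ^ (1 + n) := by rw [add_comm]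
    rw [h1, zpow_add, zpow_one]
    rfl
  have hd : ∀ n : ℤ, dist (xo n) (yo n) = r k := by
    intro n
    rw [hxo, hyo]
    show dist ((fX.toEquiv ^ n) x) ((fX.toEquiv ^ n) y) = r k
    rw [dist_zpow_pair x y rfl n]
    show |0 - r k| = r k
    rw [zero_sub, abs_neg, abs_of_pos (r_pos k)]
  have ht := H1 xo yo (horb x) (horb y) (fun n => by rw [hd n]; exact hk)
  have heq : (fun n : ℕ => dist (xo n) (yo n)) = fun _ => r k := funext fun n => hd n
  rw [heq] at ht
  have := tendsto_nhds_unique ht tendsto_const_nhds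
  exact absurd this.symm (r_pos k).ne'


lemma vgap {u v d : ℝ} (hu : u = 0 ∨ ∃ k, u = r k) (hv : v = 0 ∨ ∃ k, v = r k)
    (hne : u ≠ v) (hle : |u - v| ≤ d) : u^2 ≤ d/2 := by
  have hd0 : 0 ≤ d := le_trans (abs_nonneg _) hle
  rcases hu with h0 | ⟨k, hk⟩
  · rw [h0]; nlinarith
  · have ha : (0:ℝ) ≤ (k:ℝ) := Nat.cast_nonneg k
    have hgap : 1/(8*((k:ℝ)+1)*((k:ℝ)+2)) ≤ |u - v| := by
      rcases hv with h0 | ⟨k', hk'⟩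
      · rw [hk, h0, sub_zero, abs_of_pos (r_pos k)]
        unfold r
        rw [div_le_div_iff₀ (by positivity) (by positivity)]
        nlinarith
      · have hkk : k ≠ k' := fun h => hne (by rw [hk, hk', h])
        have hb : (0:ℝ) ≤ (k':ℝ) := Nat.cast_nonneg k'
        rw [hk, hk']
        unfold r
        rcases lt_or_gt_of_ne hkk with hlt | hgt
        · have hblt : (k:ℝ) + 1 ≤ (k':ℝ) := by exact_mod_cast hlt
          have hpos : (0:ℝ) < 1/(8*((k:ℝ)+1)) - 1/(8*((k':ℝ)+1)) := by
            rw [sub_pos]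
            apply div_lt_div_of_pos_left (by norm_num) (by positivity)
            nlinarith
          rw [abs_of_pos hpos]
          rw [div_sub_div _ _ (by positivity) (by positivity),
            div_le_div_iff₀ (by positivity) (by positivity)]
          nlinarith [mul_nonneg (sq_nonneg ((k:ℝ)+1)) (by linarith : (0:ℝ) ≤ (k':ℝ) - k - 1)]
        · have hblt : (k':ℝ) + 1 ≤ (k:ℝ) := by exact_mod_cast hgt
          have hneg : 1/(8*((k:ℝ)+1)) - 1/(8*((k':ℝ)+1)) < 0 := by
            rw [sub_neg]
            apply div_lt_div_of_pos_left (by norm_num) (by positivity)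
            nlinarith
          rw [abs_of_neg hneg, neg_sub]
          rw [div_sub_div _ _ (by positivity) (by positivity),
            div_le_div_iff₀ (by positivity) (by positivity)]
          have key : ((k':ℝ)+1) ≤ ((k:ℝ)-(k':ℝ))*((k:ℝ)+2) := by nlinarith
          nlinarith [mul_le_mul_of_nonneg_left key (by positivity : (0:ℝ) ≤ 64*((k:ℝ)+1))]
    have hgd : 1/(8*((k:ℝ)+1)*((k:ℝ)+2)) ≤ d := le_trans hgap hle
    rw [hk]
    unfold r
    rw [div_pow, div_le_div_iff₀ (by positivity) (by norm_num)]
    rw [div_le_iff₀ (by positivity)] at hgd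
    nlinarith

lemma shift_shadow (M : ℕ) (b : ℕ → Sig)
    (hb : ∀ n, D (sh (b n)) (b (n+1)) ≤ (1/2:ℝ)^(M+1)/8) :
    ∃ Y : Sig, ∀ (n : ℕ) (m : ℤ), m.natAbs ≤ M → Y (m + n) = b n m := by
  have KEY : ∀ (n : ℕ) (m : ℤ), m.natAbs ≤ M → b n (m + 1) = b (n+1) m := by
    intro n m hm
    have hlt : (1/2:ℝ)^(M+1)/8 < w m := by
      have h1 := w_ge hm
      have h2 : (0:ℝ) < (1/2:ℝ)^M := by positivity
      calc (1/2:ℝ)^(M+1)/8 = (1/2:ℝ)^M/16 := by ring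
      _ < (1/2:ℝ)^M/4 := by linarith
      _ ≤ w m := h1
    exact eq_of_D_lt (hb n) hlt
  have CL : ∀ (a s : ℕ) (i : ℤ), (∀ j : ℕ, j < s → (i - j - 1).natAbs ≤ M) →
      b a i = b (a + s) (i - s) := by
    intro a s
    induction s with
    | zero => intro i _; simp
    | succ s ih =>
      intro i h
      have h1 : b a i = b (a + s) (i - s) := ih i (fun j hj => h j (by omega))
      have h2 : b (a + s) ((i - s - 1) + 1) = b (a + s + 1) (i - s - 1) :=
        KEY (a + s) (i - s - 1) (h s (by omega))
      have h3 : (i - (s:ℤ) - 1) + 1 = i - s := by ring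
      rw [h3] at h2
      rw [h1, h2]
      have h4 : a + s + 1 = a + (s + 1) := by omega
      have h5 : i - (s:ℤ) - 1 = i - ((s:ℕ)+1 : ℕ) := by push_cast; ring
      rw [h4, h5] at h2 ⊢
  refine ⟨(fun j => if 0 ≤ j then b j.toNat 0 else b 0 j : Sig), ?_⟩
  intro n m hm
  by_cases h1 : 0 ≤ m + (n:ℤ)
  · have hY : (fun j => if 0 ≤ j then b j.toNat 0 else b 0 j : Sig) (m + n) =
        b (m + (n:ℤ)).toNat 0 := if_pos h1
    rw [hY]
    by_cases h2 : 0 ≤ m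
    · have hc := CL n m.toNat m (fun j hj => by omega)
      have e1 : m - (m.toNat : ℤ) = 0 := by omega
      have e2 : n + m.toNat = (m + (n:ℤ)).toNat := by omega
      rw [e1, e2] at hc
      exact hc.symm
    · push_neg at h2
      have hc := CL (m + (n:ℤ)).toNat (-m).toNat 0 (fun j hj => by omega)
      have e1 : (0:ℤ) - ((-m).toNat : ℤ) = m := by omega
      have e2 : (m + (n:ℤ)).toNat + (-m).toNat = n := by omega
      rw [e1, e2] at hc
      exact hc
  · push_neg at h1
    have hY : (fun j => if 0 ≤ j then b j.toNat 0 else b 0 j : Sig) (m + n) =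
        b 0 (m + n) := if_neg (by omega)
    rw [hY]
    have hc := CL 0 n (m + (n:ℤ)) (fun j hj => by omega)
    have e1 : m + (n:ℤ) - (n:ℤ) = m := by ring
    have e2 : 0 + n = n := by omega
    rw [e1, e2] at hc
    exact hc


lemma part2 : Shadowing (⇑fX) := by
  classical
  intro ε hε
  obtain ⟨M, hM⟩ : ∃ M : ℕ, (1/2:ℝ)^M ≤ ε := by
    obtain ⟨M, hM⟩ := exists_pow_lt_of_lt_one hε (by norm_num : (1/2:ℝ) < 1)
    exact ⟨M, hM.le⟩
  set K : ℕ := ⌈1/(4*ε)⌉₊ with hK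
  set δ : ℝ := min ((1/2:ℝ)^(M+1)/8) (min ((1/2:ℝ)^K/8) (ε^2/2)) with hδ
  have hδ1 : δ ≤ (1/2:ℝ)^(M+1)/8 := min_le_left _ _
  have hδ2 : δ ≤ (1/2:ℝ)^K/8 := le_trans (min_le_right _ _) (min_le_left _ _)
  have hδ3 : δ ≤ ε^2/2 := le_trans (min_le_right _ _) (min_le_right _ _)
  refine ⟨δ, by positivity, ?_⟩
  intro x hx
  set b : ℕ → Sig := fun n => (x n).1.1 with hb
  set t : ℕ → ℝ := fun n => (x n).1.2 with ht
  have hbd : ∀ n, D (sh (b n)) (b (n+1)) ≤ δ := by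
    intro n
    have h := hx n
    rw [dist_X] at h
    exact le_trans (le_max_left _ _) h
  have htd : ∀ n, |t n - t (n+1)| ≤ δ := by
    intro n
    have h := hx n
    rw [dist_X] at h
    exact le_trans (le_max_right _ _) h
  have hV : ∀ n, t n = 0 ∨ ∃ k, t n = r k := by
    intro n
    rcases (x n).2 with h0 | ⟨k, hk, -⟩
    · exact Or.inl h0
    · exact Or.inr ⟨k, hk⟩
  have htnonneg : ∀ n, 0 ≤ t n := fun n => snd_nonneg (x n).2
  have finish : (∀ n, t n ≤ ε/2) → ∃ y : ↥Xs, ∀ n, dist ((⇑fX)^[n] y) (x n) ≤ ε := by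
    intro ht2
    obtain ⟨Y, hY⟩ := shift_shadow M b (fun n => le_trans (hbd n) hδ1)
    refine ⟨⟨(Y, 0), base_mem Y⟩, ?_⟩
    intro n
    rw [dist_X]
    apply max_le
    · have hwin : ∀ m : ℤ, m.natAbs ≤ M →
          ((⇑fX)^[n] (⟨(Y, 0), base_mem Y⟩ : ↥Xs)).1.1 m = (x n).1.1 m := by
        intro m hm
        rw [(iter_spec n _).2 m]
        exact hY n m hm
      have h2 := D_le_of_window hwin
      have h3 : (0:ℝ) < (1/2:ℝ)^M := by positivity
      calc D _ _ ≤ (1/2:ℝ)^M/8 := h2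
      _ ≤ (1/2:ℝ)^M := by linarith
      _ ≤ ε := hM
    · rw [(iter_spec n _).1]
      show |(0:ℝ) - t n| ≤ ε
      rw [zero_sub, abs_neg, abs_of_nonneg (htnonneg n)]
      linarith [ht2 n]
  by_cases hA : ∀ n, t n = t 0
  · by_cases hsm : t 0 ≤ ε/2
    · exact finish (fun n => (hA n) ▸ hsm)
    · push_neg at hsm
      have ht0 : t 0 ≠ 0 := by
        intro h; rw [h] at hsm; linarith
      obtain ⟨k, hk, hbO⟩ : ∃ k, t 0 = r k ∧ b 0 ∈ O k := by
        rcases (x 0).2 with h0 | ⟨k, hk, hm⟩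
        · exact absurd h0 ht0
        · exact ⟨k, hk, hm⟩
      have hkK : k ≤ K := by
        have h1 : ε/2 < r k := hk ▸ hsm
        have h2 : ((k:ℝ)+1) < 1/(4*ε) := by
          unfold r at h1
          rw [div_lt_div_iff₀ (by norm_num) (by positivity)] at h1
          rw [lt_div_iff₀ (by positivity)]
          nlinarith
        have h3 : 1/(4*ε) ≤ (K:ℝ) := Nat.le_ceil _
        have h4 : (k:ℝ) < (K:ℝ) := by linarith
        have h5 : k < K := by exact_mod_cast h4
        omega
      have hOa : ∀ n, b n ∈ O k := by
        intro n
        have htn : t n = r k := (hA n).trans hk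
        rcases (x n).2 with h0 | ⟨k', hk', hm'⟩
        · have h0' : t n = 0 := h0
          rw [h0'] at htn
          exact absurd htn.symm (r_pos k).ne'
        · have hk'' : t n = r k' := hk'
          have heq : k' = k := r_inj (hk''.symm.trans htn)
          exact heq ▸ hm'
      have hchain : ∀ n, x (n+1) = fX (x n) := by
        intro n
        have hbase : sh (b n) = b (n+1) := by
          by_contra hne
          have hsep := O_sep (sh_mem_O (hOa n)) (hOa (n+1)) hne
          have h1 : ((1:ℝ)/2)^k/4 ≤ δ := le_trans hsep (hbd n)
          have h2 : ((1:ℝ)/2)^K ≤ ((1:ℝ)/2)^k :=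
            pow_le_pow_of_le_one (by norm_num) (by norm_num) hkK
          have h3 : (0:ℝ) < ((1:ℝ)/2)^k := by positivity
          linarith
        apply Subtype.ext
        have hfx : (fX (x n)).1 = (sh (b n), t n) := rfl
        rw [hfx, hbase]
        have h2 : t (n+1) = t n := (hA (n+1)).trans (hA n).symm
        show (b (n+1), t (n+1)) = (b (n+1), t n)
        rw [h2]
      refine ⟨x 0, fun n => ?_⟩
      have hiter : (⇑fX)^[n] (x 0) = x n := by
        induction n with
        | zero => rfl
        | succ n ih => rw [Function.iterate_succ_apply', ih, ← hchain n]
      rw [hiter, dist_self]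
      linarith
  · apply finish
    have hstep : ∀ n, t n ≠ t (n+1) → t n^2 ≤ δ/2 ∧ t (n+1)^2 ≤ δ/2 := by
      intro n hne
      constructor
      · exact vgap (hV n) (hV (n+1)) hne (htd n)
      · refine vgap (hV (n+1)) (hV n) (Ne.symm hne) ?_
        rw [abs_sub_comm]
        exact htd n
    have hex : ∃ n, t n ≠ t (n+1) := by
      by_contra hc
      push_neg at hc
      apply hA
      intro n
      induction n with
      | zero => rfl
      | succ n ih => rw [← hc n]; exact ih
    set n0 := Nat.find hex with hn0
    have hspec : t n0 ≠ t (n0 + 1) := Nat.find_spec hex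
    have hmin : ∀ m, m < n0 → t m = t (m+1) := fun m hm =>
      not_not.mp (Nat.find_min hex hm)
    have hupto : ∀ i m, m + i = n0 → t m = t n0 := by
      intro i
      induction i with
      | zero => intro m hm; rw [Nat.add_zero] at hm; rw [hm]
      | succ i ih =>
        intro m hm
        rw [hmin m (by omega)]
        exact ih (m+1) (by omega)
    have hbase0 : t n0 ^2 ≤ δ/2 := (hstep n0 hspec).1
    have hall : ∀ n, t n ^2 ≤ δ/2 := by
      have hafter : ∀ i, t (n0 + i)^2 ≤ δ/2 := by
        intro i
        induction i with
        | zero => simpa using hbase0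
        | succ i ih =>
          by_cases hne : t (n0+i) = t (n0+i+1)
          · rw [show n0 + (i+1) = n0 + i + 1 by omega, ← hne]
            exact ih
          · have h := (hstep (n0+i) hne).2
            rw [show n0 + (i+1) = n0 + i + 1 by omega]
            exact h
      intro n
      by_cases hn : n ≤ n0
      · rw [hupto (n0 - n) n (by omega)]
        exact hbase0
      · have h := hafter (n - n0)
        rw [show n0 + (n - n0) = n by omega] at h
        exact h
    intro n
    have h1 := hall n
    nlinarith [htnonneg n, hε]

end NExpC

/-- For every `N ≥ 2` there is a compact metric space with an `N`-expansive homeomorphism having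
the shadowing property which is not asymptotically expansive (hence not bi-asymptotically
`c`-expansive). -/
theorem exists_nExpansive_shadowing_not_asympExpansive (N : ℕ) (hN : 2 ≤ N) :
    ∃ (X : Type) (_ : MetricSpace X) (_ : CompactSpace X) (f : X ≃ₜ X),
      -- f is N-expansive with some constant c > 0
      (∃ c > (0 : ℝ), ∀ x : X,
        ({y : X | ∀ n : ℤ, dist ((f.toEquiv ^ n) x) ((f.toEquiv ^ n) y) ≤ c}).Finite ∧
        ({y : X | ∀ n : ℤ, dist ((f.toEquiv ^ n) x) ((f.toEquiv ^ n) y) ≤ c}).ncard ≤ N) ∧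
      -- f has the shadowing property
      Shadowing (⇑f) ∧
      -- f is not asymptotically expansive
      (¬ ∃ c > (0 : ℝ), AsympExpWith (⇑f) c) ∧
      -- hence f is not bi-asymptotically c-expansive
      ¬ BiAsympCExpansive (⇑f) := by
  exact ⟨↥NExpC.Xs, inferInstance, inferInstance, NExpC.fX,
    ⟨1/8, by norm_num, NExpC.part1 N hN⟩, NExpC.part2, NExpC.part3, NExpC.part4⟩
end
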